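/- arXiv:2102.07876 — 7 statements merged into one kernel-verified Lean document; each statement's English description precedes it below -/
import Mathlib

section
/- Let Q ⊂ ℝ^D be a bounded domain and let V_n : Q → ℝ be a sequence of measurable functions with sup_n ‖V_n‖_{L^∞(Q)} < ∞, and let {s_{n,N}} be a regular summation method. Suppose there exists V ∈ L^∞(Q) such that for every ε > 0 the set S(ε) = { (n,m) ∈ ℕ×ℕ : s_{n,M} s_{m,M} |∫_Q (V_n − V)(V_m − V) dx| < ε for all M ∈ ℕ } is statistically significant. Then the weighted averages (1/N) Σ_{n=1}^N s_{n,N} V_n converge to V in L^q(Q) as N → ∞, for every 1 ≤ q < ∞. -/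
/-!
With `f n = V n - Vlim`, the weighted average minus `Vlim` is `(1/N) ∑ s_{n,N} f_n`, whose squared
`L²` norm is `(1/N²) ∑_{n,m ≤ N} s_{n,N} s_{m,N} ∫ f_n f_m`. The pairs in `S(ε)` contribute at
most `ε` each and, by statistical significance, only `o(N²)` pairs remain, each contributing a
bounded amount; so the averages tend to `0` in `L²`, hence in measure. They are uniformly bounded
on a set of finite measure, hence uniformly integrable, and Vitali's convergence theorem upgrades
convergence in measure to convergence in every `L^q`, `q < ∞`.
-/

open MeasureTheory Filter Finset
open scoped ENNReal

/-- A regular summation method with uniform bound `sbar`. -/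
def IsRegularSummation (s : ℕ → ℕ → ℝ) (sbar : ℝ) : Prop :=
  (∀ n N, 0 ≤ s n N) ∧ (∀ n N, s n N ≤ sbar) ∧
  (∀ n N, N < n → s n N = 0) ∧
  (∀ N : ℕ, ∑ n ∈ Finset.Icc 1 N, s n N = (N : ℝ))

/-- A set `S ⊆ ℕ × ℕ` is statistically significant if
`#{(n,m) ∈ S : n, m ≤ N} / N² → 1` as `N → ∞`. -/
def StatSignificant (S : Set (ℕ × ℕ)) : Prop :=
  Filter.Tendsto
    (fun N : ℕ => ((S ∩ {p : ℕ × ℕ | p.1 ≤ N ∧ p.2 ≤ N}).ncard : ℝ) / (N : ℝ) ^ 2)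
    Filter.atTop (nhds 1)

lemma StatSignificant.tendsto_card_filter_notMem_div_sq {S : Set (ℕ × ℕ)}
    [DecidablePred (· ∈ S)] (hS : StatSignificant S) :
    Tendsto (fun N : ℕ => (((Icc 1 N ×ˢ Icc 1 N).filter (· ∉ S)).card : ℝ) / (N : ℝ) ^ 2)
      atTop (nhds 0) := by
  have hcount : ∀ N : ℕ, ((Icc 1 N ×ˢ Icc 1 N).filter (· ∉ S)).card
      + (S ∩ {p : ℕ × ℕ | p.1 ≤ N ∧ p.2 ≤ N}).ncard ≤ (N + 1) ^ 2 := by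
    intro N
    have hsquare : {p : ℕ × ℕ | p.1 ≤ N ∧ p.2 ≤ N} = ↑(range (N + 1) ×ˢ range (N + 1)) := by
      ext p; simp
    have hsub : (↑((Icc 1 N ×ˢ Icc 1 N).filter (· ∉ S)) : Set (ℕ × ℕ))
        ⊆ {p : ℕ × ℕ | p.1 ≤ N ∧ p.2 ≤ N} \ S := by
      intro p hp
      simp only [coe_filter, mem_product, mem_Icc, Set.mem_ofPred_eq] at hp
      exact ⟨⟨hp.1.1.2, hp.1.2.2⟩, hp.2⟩
    rw [← Set.ncard_coe_finset, Set.inter_comm, add_comm]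
    calc _ ≤ ({p : ℕ × ℕ | p.1 ≤ N ∧ p.2 ≤ N} ∩ S).ncard
          + ({p : ℕ × ℕ | p.1 ≤ N ∧ p.2 ≤ N} \ S).ncard :=
          Nat.add_le_add_left (Set.ncard_le_ncard hsub (hsquare ▸ (Set.toFinite _).sdiff)) _
      _ = (N + 1) ^ 2 := by
          rw [Set.ncard_inter_add_ncard_sdiff_eq_ncard _ _ (hsquare ▸ Set.toFinite _), hsquare,
            Set.ncard_coe_finset, card_product, card_range, sq]
  have hupper : Tendsto (fun N : ℕ => ((N : ℝ) + 1) ^ 2 / (N : ℝ) ^ 2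
      - ((S ∩ {p : ℕ × ℕ | p.1 ≤ N ∧ p.2 ≤ N}).ncard : ℝ) / (N : ℝ) ^ 2) atTop (nhds 0) := by
    have hsq : Tendsto (fun N : ℕ => ((N : ℝ) + 1) ^ 2 / (N : ℝ) ^ 2) atTop (nhds 1) := by
      have h := ((tendsto_natCast_div_add_atTop (1 : ℝ)).pow 2).inv₀ (by norm_num)
      simp only [one_pow, inv_one] at h
      refine h.congr fun N => ?_
      rw [div_pow, inv_div]
    simpa using hsq.sub hS
  refine tendsto_of_tendsto_of_tendsto_of_le_of_le' tendsto_const_nhds hupper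
    (Eventually.of_forall fun N => by positivity) ?_
  filter_upwards [eventually_ne_atTop 0] with N hN
  rw [← sub_div]
  gcongr
  have := hcount N
  rw [le_sub_iff_add_le]
  exact_mod_cast this

lemma abs_sum_le_card_mul_add_card_filter_not_mul {ι : Type*} (t : Finset ι) (P : ι → Prop)
    [DecidablePred P] {f : ι → ℝ} {ε B : ℝ} (hε : 0 ≤ ε)
    (hP : ∀ i ∈ t, P i → |f i| ≤ ε) (hB : ∀ i ∈ t, |f i| ≤ B) :
    |∑ i ∈ t, f i| ≤ #t * ε + #(t.filter fun i => ¬P i) * B := by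
  calc |∑ i ∈ t, f i| ≤ ∑ i ∈ t, |f i| := abs_sum_le_sum_abs _ _
    _ = ∑ i ∈ t.filter P, |f i| + ∑ i ∈ t.filter fun i => ¬P i, |f i| :=
        (sum_filter_add_sum_filter_not _ _ _).symm
    _ ≤ #(t.filter P) * ε + #(t.filter fun i => ¬P i) * B := by
        rw [← nsmul_eq_mul, ← nsmul_eq_mul]
        gcongr ?_ + ?_ <;> refine sum_le_card_nsmul _ _ _ fun i hi => ?_ <;>
          simp only [mem_filter] at hi
        exacts [hP i hi.1 hi.2, hB i hi.1]
    _ ≤ #t * ε + #(t.filter fun i => ¬P i) * B := by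
        gcongr
        exact filter_subset P t

lemma tendsto_sum_box_div_sq_of_statSignificant {a : ℕ → ℕ × ℕ → ℝ} {B : ℝ}
    (hB : ∀ N p, |a N p| ≤ B)
    (hsig : ∀ ε : ℝ, 0 < ε → StatSignificant {p : ℕ × ℕ | ∀ N, |a N p| < ε}) :
    Tendsto (fun N : ℕ => (∑ p ∈ Icc 1 N ×ˢ Icc 1 N, a N p) / (N : ℝ) ^ 2)
      atTop (nhds 0) := by
  classical
  rw [Metric.tendsto_nhds]
  intro ε hε
  set S := {p : ℕ × ℕ | ∀ N, |a N p| < ε / 2}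
  have hbound : Tendsto (fun N : ℕ =>
      ε / 2 + (((Icc 1 N ×ˢ Icc 1 N).filter (· ∉ S)).card : ℝ) / (N : ℝ) ^ 2 * B)
      atTop (nhds (ε / 2)) := by
    have := (hsig _ (half_pos hε)).tendsto_card_filter_notMem_div_sq.mul_const B
    rw [zero_mul] at this
    simpa only [add_zero] using tendsto_const_nhds.add this
  filter_upwards [hbound.eventually_lt_const (half_lt_self hε), eventually_ne_atTop 0]
    with N hlt hN
  have hN2 : (0 : ℝ) < (N : ℝ) ^ 2 := by positivity
  have hsum := abs_sum_le_card_mul_add_card_filter_not_mul (Icc 1 N ×ˢ Icc 1 N) (· ∈ S)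
    (f := a N) (half_pos hε).le (fun p _ hp => (hp N).le) (fun p _ => hB N p)
  rw [card_product, Nat.card_Icc, Nat.add_sub_cancel] at hsum
  rw [Real.dist_eq, sub_zero, abs_div, abs_of_pos hN2, div_lt_iff₀ hN2]
  calc _ ≤ _ := hsum
    _ = (ε / 2 + (((Icc 1 N ×ˢ Icc 1 N).filter (· ∉ S)).card : ℝ) / (N : ℝ) ^ 2 * B)
          * (N : ℝ) ^ 2 := by field_simp; push_cast; ring
    _ < ε * (N : ℝ) ^ 2 := by gcongr

section Lp

variable {α : Type*} [MeasurableSpace α] {μ : Measure α}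

lemma integral_sq_sum_eq_sum_mul_integral_mul {ι : Type*} (t : Finset ι) (c : ι → ℝ)
    (f : ι → α → ℝ) (hf : ∀ i j, Integrable (fun x => f i x * f j x) μ) :
    ∫ x, (∑ i ∈ t, c i * f i x) ^ 2 ∂μ
      = ∑ p ∈ t ×ˢ t, c p.1 * c p.2 * ∫ x, f p.1 x * f p.2 x ∂μ := by
  have hexpand : ∀ x, (∑ i ∈ t, c i * f i x) ^ 2
      = ∑ p ∈ t ×ˢ t, c p.1 * c p.2 * (f p.1 x * f p.2 x) := fun x => by
    rw [sq, sum_mul_sum, sum_product]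
    exact sum_congr rfl fun i _ => sum_congr rfl fun j _ => by ring
  simp_rw [hexpand]
  rw [integral_finsetSum _ fun p _ => (hf p.1 p.2).const_mul _]
  simp_rw [integral_const_mul]

lemma tendsto_eLpNorm_two_zero_of_tendsto_integral_sq {ι : Type*} {l : Filter ι}
    {g : ι → α → ℝ} (hg : ∀ i, MemLp (g i) 2 μ)
    (h : Tendsto (fun i => ∫ x, g i x ^ 2 ∂μ) l (nhds 0)) :
    Tendsto (fun i => eLpNorm (g i) 2 μ) l (nhds 0) := by
  have heq : ∀ i, eLpNorm (g i) 2 μ = ENNReal.ofReal √(∫ x, g i x ^ 2 ∂μ) := fun i => by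
    rw [(hg i).eLpNorm_eq_integral_rpow_norm two_ne_zero ENNReal.ofNat_ne_top,
      Real.sqrt_eq_rpow]
    simp [Real.norm_eq_abs, sq_abs]
  simp_rw [heq]
  simpa [Function.comp_def] using
    (ENNReal.continuous_ofReal.tendsto _).comp ((Real.continuous_sqrt.tendsto 0).comp h)

variable {E : Type*} [NormedAddCommGroup E]

lemma unifIntegrable_of_ae_norm_le {ι : Type*} {p : ℝ≥0∞} (hp1 : 1 ≤ p) (hp : p ≠ ∞)
    {f : ι → α → E} {K : ℝ} (hf : ∀ i, AEStronglyMeasurable (f i) μ)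
    (hK : ∀ i, ∀ᵐ x ∂μ, ‖f i x‖ ≤ K) : UnifIntegrable f p μ := by
  refine unifIntegrable_of hp1 hp hf fun ε hε => ⟨K.toNNReal + 1, fun i => ?_⟩
  have hzero : {x | K.toNNReal + 1 ≤ ‖f i x‖₊}.indicator (f i) =ᵐ[μ] 0 := by
    filter_upwards [hK i] with x hx
    refine Set.indicator_of_notMem (fun hmem => ?_) _
    have : (K.toNNReal : ℝ) + 1 ≤ ‖f i x‖ := by exact_mod_cast hmem
    linarith [Real.le_coe_toNNReal K]
  rw [eLpNorm_congr_ae hzero, eLpNorm_zero]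
  exact zero_le

lemma tendsto_eLpNorm_zero_of_tendstoInMeasure_of_ae_norm_le [IsFiniteMeasure μ]
    {p : ℝ≥0∞} (hp1 : 1 ≤ p) (hp : p ≠ ∞) {f : ℕ → α → E} {K : ℝ}
    (hf : ∀ n, AEStronglyMeasurable (f n) μ) (hK : ∀ n, ∀ᵐ x ∂μ, ‖f n x‖ ≤ K)
    (h : TendstoInMeasure μ f atTop 0) :
    Tendsto (fun n => eLpNorm (f n) p μ) atTop (nhds 0) := by
  simpa using tendsto_Lp_finite_of_tendstoInMeasure hp1 hp hf MemLp.zero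
    (unifIntegrable_of_ae_norm_le hp1 hp hf hK) h

end Lp

namespace IsRegularSummation

variable {s : ℕ → ℕ → ℝ} {sbar : ℝ}

lemma weighted_average_sub_const (hreg : IsRegularSummation s sbar) {N : ℕ} (hN : N ≠ 0)
    (a : ℕ → ℝ) (b : ℝ) :
    1 / (N : ℝ) * ∑ n ∈ Icc 1 N, s n N * a n - b
      = 1 / (N : ℝ) * ∑ n ∈ Icc 1 N, s n N * (a n - b) := by
  simp_rw [mul_sub, sum_sub_distrib, ← sum_mul, hreg.2.2.2 N]
  field_simp

lemma abs_weighted_average_le (hreg : IsRegularSummation s sbar) (N : ℕ) {a : ℕ → ℝ} {K : ℝ}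
    (ha : ∀ n, |a n| ≤ K) : |1 / (N : ℝ) * ∑ n ∈ Icc 1 N, s n N * a n| ≤ K := by
  rcases eq_or_ne N 0 with rfl | hN
  · simpa using (abs_nonneg _).trans (ha 0)
  have hsum : |∑ n ∈ Icc 1 N, s n N * a n| ≤ N * K :=
    calc |∑ n ∈ Icc 1 N, s n N * a n| ≤ ∑ n ∈ Icc 1 N, s n N * K := by
          refine (abs_sum_le_sum_abs _ _).trans (sum_le_sum fun n _ => ?_)
          rw [abs_mul, abs_of_nonneg (hreg.1 n N)]
          exact mul_le_mul_of_nonneg_left (ha n) (hreg.1 n N)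
      _ = N * K := by rw [← sum_mul, hreg.2.2.2 N]
  rw [abs_mul, abs_of_nonneg (by positivity), one_div, inv_mul_le_iff₀ (by positivity)]
  exact hsum

end IsRegularSummation

section WeightedAverage

variable {α : Type*} [MeasurableSpace α] {μ : Measure α} [IsFiniteMeasure μ] {f : ℕ → α → ℝ}
  {K : ℝ} {s : ℕ → ℕ → ℝ} {sbar : ℝ}

lemma tendsto_integral_sq_weighted_average_of_statSignificant
    (hf : ∀ n, AEStronglyMeasurable (f n) μ) (hK : ∀ n, ∀ᵐ x ∂μ, |f n x| ≤ K)
    (hreg : IsRegularSummation s sbar)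
    (hsig : ∀ ε : ℝ, 0 < ε → StatSignificant
      {p : ℕ × ℕ | ∀ M : ℕ, s p.1 M * s p.2 M * |∫ x, f p.1 x * f p.2 x ∂μ| < ε}) :
    Tendsto (fun N : ℕ => ∫ x, (1 / (N : ℝ) * ∑ n ∈ Icc 1 N, s n N * f n x) ^ 2 ∂μ)
      atTop (nhds 0) := by
  have hfK2 : ∀ n m, ∀ᵐ x ∂μ, ‖f n x * f m x‖ ≤ K * K := fun n m => by
    filter_upwards [hK n, hK m] with x hn hm
    rw [norm_mul]
    exact mul_le_mul hn hm (norm_nonneg _) ((abs_nonneg _).trans hn)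
  have hint : ∀ n m, Integrable (fun x => f n x * f m x) μ := fun n m =>
    Integrable.of_bound ((hf n).mul (hf m)) _ (hfK2 n m)
  have hcorr : ∀ (N : ℕ) (p : ℕ × ℕ), |s p.1 N * s p.2 N * ∫ x, f p.1 x * f p.2 x ∂μ|
      = s p.1 N * s p.2 N * |∫ x, f p.1 x * f p.2 x ∂μ| := fun N p => by
    rw [abs_mul, abs_of_nonneg (mul_nonneg (hreg.1 _ _) (hreg.1 _ _))]
  have hcorr_le : ∀ (N : ℕ) (p : ℕ × ℕ), |s p.1 N * s p.2 N * ∫ x, f p.1 x * f p.2 x ∂μ|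
      ≤ sbar * sbar * (K * K * μ.real Set.univ) := fun N p => by
    rw [hcorr]
    have hsbar : 0 ≤ sbar := (hreg.1 0 0).trans (hreg.2.1 0 0)
    gcongr
    · exact hreg.1 _ _
    · exact hreg.2.1 _ _
    · exact hreg.2.1 _ _
    · exact norm_integral_le_of_norm_le_const (hfK2 _ _)
  simp_rw [mul_pow, integral_const_mul,
    integral_sq_sum_eq_sum_mul_integral_mul _ (fun n => s n _) f hint, one_div, inv_pow,
    inv_mul_eq_div]
  exact tendsto_sum_box_div_sq_of_statSignificant hcorr_le (by simpa only [hcorr] using hsig)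

theorem tendsto_eLpNorm_weighted_average_of_statSignificant
    (hf : ∀ n, AEStronglyMeasurable (f n) μ) (hK : ∀ n, ∀ᵐ x ∂μ, |f n x| ≤ K)
    (hreg : IsRegularSummation s sbar)
    (hsig : ∀ ε : ℝ, 0 < ε → StatSignificant
      {p : ℕ × ℕ | ∀ M : ℕ, s p.1 M * s p.2 M * |∫ x, f p.1 x * f p.2 x ∂μ| < ε})
    {q : ℝ≥0∞} (hq1 : 1 ≤ q) (hq : q ≠ ⊤) :
    Tendsto (fun N : ℕ => eLpNorm (fun x => 1 / (N : ℝ) * ∑ n ∈ Icc 1 N, s n N * f n x) q μ)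
      atTop (nhds 0) := by
  set g : ℕ → α → ℝ := fun N x => 1 / (N : ℝ) * ∑ n ∈ Icc 1 N, s n N * f n x
  have hg : ∀ N, AEStronglyMeasurable (g N) μ := fun N =>
    (Finset.aestronglyMeasurable_fun_sum _ fun n _ => (hf n).const_mul _).const_mul _
  have hgK : ∀ N, ∀ᵐ x ∂μ, ‖g N x‖ ≤ K := fun N => by
    filter_upwards [ae_all_iff.2 hK] with x hx using hreg.abs_weighted_average_le N hx
  have hL2 : Tendsto (fun N => eLpNorm (g N - 0) 2 μ) atTop (nhds 0) := by
    simpa only [sub_zero] using tendsto_eLpNorm_two_zero_of_tendsto_integral_sq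
      (fun N => MemLp.of_bound (hg N) K (hgK N))
      (tendsto_integral_sq_weighted_average_of_statSignificant hf hK hreg hsig)
  exact tendsto_eLpNorm_zero_of_tendstoInMeasure_of_ae_norm_le hq1 hq hg hgK
    (tendstoInMeasure_of_tendsto_eLpNorm two_ne_zero hg aestronglyMeasurable_zero hL2)

end WeightedAverage

theorem weighted_averages_tendsto_of_statSignificant_general
    {D : ℕ} (Q : Set (EuclideanSpace ℝ (Fin D)))
    (hQbdd : Bornology.IsBounded Q)
    (V : ℕ → EuclideanSpace ℝ (Fin D) → ℝ)
    (hVmeas : ∀ n, Measurable (V n))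
    (C : ℝ) (hC : ∀ n, ∀ᵐ x ∂(volume.restrict Q), |V n x| ≤ C)
    (s : ℕ → ℕ → ℝ) (sbar : ℝ) (hreg : IsRegularSummation s sbar)
    (Vlim : EuclideanSpace ℝ (Fin D) → ℝ)
    (hVlim : MemLp Vlim ⊤ (volume.restrict Q))
    (hsig : ∀ ε : ℝ, 0 < ε → StatSignificant
      {p : ℕ × ℕ | ∀ M : ℕ, s p.1 M * s p.2 M *
        |∫ x in Q, (V p.1 x - Vlim x) * (V p.2 x - Vlim x)| < ε}) :
    ∀ q : ℝ≥0∞, 1 ≤ q → q ≠ ⊤ →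
      Filter.Tendsto (fun N : ℕ =>
        eLpNorm (fun x => (1 / (N : ℝ)) * ∑ n ∈ Finset.Icc 1 N, s n N * V n x - Vlim x)
          q (volume.restrict Q)) Filter.atTop (nhds 0) := by
  intro q hq1 hq
  have : IsFiniteMeasure (volume.restrict Q) := isFiniteMeasure_restrict.2 hQbdd.measure_lt_top.ne
  obtain ⟨C', hC'⟩ := eLpNormEssSup_lt_top_iff_isBoundedUnder.1 hVlim.2
  have hbound : ∀ n, ∀ᵐ x ∂(volume.restrict Q), |V n x - Vlim x| ≤ C + C' := fun n => by
    filter_upwards [hC n, hC'] with x hVn hVlimx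
    exact (abs_sub _ _).trans (add_le_add hVn hVlimx)
  refine (tendsto_eLpNorm_weighted_average_of_statSignificant (f := fun n x => V n x - Vlim x)
    (fun n => (hVmeas n).aestronglyMeasurable.sub hVlim.1) hbound hreg hsig hq1 hq).congr' ?_
  filter_upwards [eventually_ne_atTop 0] with N hN
  simp_rw [hreg.weighted_average_sub_const hN]

/-- Lemma 3.2 of the paper: if for every `ε > 0` the set
`S(ε) = {(n,m) : s_{n,M} s_{m,M} |∫_Q (V_n − V)(V_m − V)| < ε for all M}`
is statistically significant, then the weighted averages `(1/N) ∑_{n=1}^N s_{n,N} V_n`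
converge to `V` in `L^q(Q)` for every `1 ≤ q < ∞`. -/
theorem weighted_averages_tendsto_of_statSignificant
    {D : ℕ} (Q : Set (EuclideanSpace ℝ (Fin D)))
    (hQopen : IsOpen Q) (hQbdd : Bornology.IsBounded Q)
    (V : ℕ → EuclideanSpace ℝ (Fin D) → ℝ)
    (hVmeas : ∀ n, Measurable (V n))
    (C : ℝ) (hC : ∀ n, ∀ᵐ x ∂(volume.restrict Q), |V n x| ≤ C)
    (s : ℕ → ℕ → ℝ) (sbar : ℝ) (hreg : IsRegularSummation s sbar)
    (Vlim : EuclideanSpace ℝ (Fin D) → ℝ)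
    (hVlim : MemLp Vlim ⊤ (volume.restrict Q))
    (hsig : ∀ ε : ℝ, 0 < ε → StatSignificant
      {p : ℕ × ℕ | ∀ M : ℕ, s p.1 M * s p.2 M *
        |∫ x in Q, (V p.1 x - Vlim x) * (V p.2 x - Vlim x)| < ε}) :
    ∀ q : ℝ≥0∞, 1 ≤ q → q ≠ ⊤ →
      Filter.Tendsto (fun N : ℕ =>
        eLpNorm (fun x => (1 / (N : ℝ)) * ∑ n ∈ Finset.Icc 1 N, s n N * V n x - Vlim x)
          q (volume.restrict Q)) Filter.atTop (nhds 0) :=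
  weighted_averages_tendsto_of_statSignificant_general Q hQbdd V hVmeas C hC s sbar hreg Vlim hVlim
    hsig
end

section
/- Let Q ⊂ ℝ^D be a bounded domain and let U_n : Q → ℝ^D be measurable vector-valued functions with U_n → U weakly in L^1(Q; ℝ^D) (i.e., ∫_Q U_n · g dx → ∫_Q U · g dx for every g ∈ L^∞(Q; ℝ^D)). Suppose that for some regular summation method {s_{n,N}} and for every continuous compactly supported function b : ℝ^D → ℝ, the weighted averages (1/N) Σ_{n=1}^N s_{n,N} b(U_n) converge weakly-* in L^∞(Q) to b(U). Then there is a subsequence {U_{n_j}} such that U_{n_j} → U strongly in L^1(Q; ℝ^D). -/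
/-!
Expanding the square, the two averaged limits in the hypothesis (for `b²` tested against `1`, and
for `b` tested against `b ∘ U`) make the weighted averages of `∫ (b(Uₙ) - b(U))²` tend to `0`, for
every tent `b` of a countable family separating points. Summed with weights `2⁻ᵏ` they give one
bounded distance `tentDist` whose averaged integrals tend to `0`. A regular summation method does
not concentrate on finitely many `n`, so `∫ tentDist(Uₙ, U) → 0` along a subsequence, and a further
subsequence converges almost everywhere. Weak convergence in `L¹` makes the sequence uniformly
integrable (Vitali–Hahn–Saks), and Vitali's convergence theorem turns almost everywhere
convergence into convergence in `L¹`.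
-/

open MeasureTheory Filter Finset
open scoped ENNReal RealInnerProductSpace

open scoped Topology

noncomputable def weightedAverage (s : ℕ → ℕ → ℝ) (a : ℕ → ℝ) (N : ℕ) : ℝ :=
  (1 / (N : ℝ)) * ∑ n ∈ Icc 1 N, s n N * a n

section WeightedAverage

variable {s : ℕ → ℕ → ℝ} {sbar : ℝ}

lemma weightedAverage_add (a b : ℕ → ℝ) (N : ℕ) :
    weightedAverage s (fun n => a n + b n) N = weightedAverage s a N + weightedAverage s b N := by
  simp only [weightedAverage, mul_add, sum_add_distrib]

lemma weightedAverage_sub (a b : ℕ → ℝ) (N : ℕ) :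
    weightedAverage s (fun n => a n - b n) N = weightedAverage s a N - weightedAverage s b N := by
  simp only [weightedAverage, mul_sub, sum_sub_distrib]

lemma weightedAverage_mul_const (a : ℕ → ℝ) (c : ℝ) (N : ℕ) :
    weightedAverage s (fun n => a n * c) N = weightedAverage s a N * c := by
  simp only [weightedAverage, ← mul_assoc, ← sum_mul]

lemma weightedAverage_const_mul (c : ℝ) (a : ℕ → ℝ) (N : ℕ) :
    weightedAverage s (fun n => c * a n) N = c * weightedAverage s a N := by
  simp only [mul_comm c, weightedAverage_mul_const]

lemma weightedAverage_mono (hs : ∀ n N, 0 ≤ s n N) {a b : ℕ → ℝ} (hab : ∀ n, a n ≤ b n)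
    (N : ℕ) : weightedAverage s a N ≤ weightedAverage s b N :=
  mul_le_mul_of_nonneg_left (sum_le_sum fun n _ => mul_le_mul_of_nonneg_left (hab n) (hs n N))
    (by positivity)

lemma IsRegularSummation.weightedAverage_const (hreg : IsRegularSummation s sbar) (c : ℝ)
    {N : ℕ} (hN : N ≠ 0) : weightedAverage s (fun _ => c) N = c := by
  rw [weightedAverage, ← sum_mul, hreg.2.2.2 N]
  field_simp

lemma IsRegularSummation.abs_weightedAverage_le (hreg : IsRegularSummation s sbar) {a : ℕ → ℝ}
    {C : ℝ} (ha : ∀ n, |a n| ≤ C) {N : ℕ} (hN : N ≠ 0) : |weightedAverage s a N| ≤ C := by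
  rw [abs_le]
  constructor
  · simpa only [hreg.weightedAverage_const _ hN] using
      weightedAverage_mono hreg.1 (fun n => (abs_le.1 (ha n)).1) N
  · simpa only [hreg.weightedAverage_const _ hN] using
      weightedAverage_mono hreg.1 (fun n => (abs_le.1 (ha n)).2) N

lemma IsRegularSummation.tendsto_weightedAverage_of_eq_zero (hreg : IsRegularSummation s sbar)
    {a : ℕ → ℝ} {m : ℕ} (ha : ∀ n, m ≤ n → a n = 0) :
    Tendsto (weightedAverage s a) atTop (𝓝 0) := by
  have hsbar : 0 ≤ sbar := (hreg.1 0 0).trans (hreg.2.1 0 0)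
  have hbound : ∀ N, |weightedAverage s a N| ≤ (∑ n ∈ range m, sbar * |a n|) * (1 / (N : ℝ)) := by
    intro N
    have hsub : ∑ n ∈ Icc 1 N, s n N * a n = ∑ n ∈ Icc 1 N ∩ range m, s n N * a n :=
      (sum_subset inter_subset_left fun n hn hnm => by
        simp only [mem_inter, mem_range, not_and, not_lt] at hnm
        rw [ha n (hnm hn), mul_zero]).symm
    rw [weightedAverage, hsub, abs_mul, abs_of_nonneg (by positivity), mul_comm]
    gcongr
    calc |∑ n ∈ Icc 1 N ∩ range m, s n N * a n|
        ≤ ∑ n ∈ Icc 1 N ∩ range m, |s n N * a n| := abs_sum_le_sum_abs _ _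
      _ ≤ ∑ n ∈ Icc 1 N ∩ range m, sbar * |a n| := sum_le_sum fun n _ => by
          rw [abs_mul, abs_of_nonneg (hreg.1 n N)]
          exact mul_le_mul_of_nonneg_right (hreg.2.1 n N) (abs_nonneg _)
      _ ≤ ∑ n ∈ range m, sbar * |a n| := sum_le_sum_of_subset_of_nonneg inter_subset_right
          fun n _ _ => mul_nonneg hsbar (abs_nonneg _)
  refine squeeze_zero_norm hbound ?_
  simpa using tendsto_one_div_atTop_nhds_zero_nat.const_mul (∑ n ∈ range m, sbar * |a n|)

lemma IsRegularSummation.mapClusterPt_zero (hreg : IsRegularSummation s sbar) {c : ℕ → ℝ}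
    (hc : ∀ n, 0 ≤ c n) (h : Tendsto (weightedAverage s c) atTop (𝓝 0)) :
    MapClusterPt 0 atTop c := by
  rw [mapClusterPt_iff_frequently]
  intro t ht
  obtain ⟨ε, hε, hball⟩ := Metric.mem_nhds_iff.1 ht
  by_contra hfreq
  obtain ⟨m, hm⟩ := eventually_atTop.1 (not_frequently.1 hfreq)
  have hge : ∀ n, ε - (if n < m then ε else 0) ≤ c n := by
    intro n
    split_ifs with hn
    · simpa using hc n
    · by_contra hlt
      refine hm n (not_lt.1 hn) (hball ?_)
      rw [Metric.mem_ball, Real.dist_0_eq_abs, abs_of_nonneg (hc n)]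
      linarith
  have hlim : Tendsto (weightedAverage s fun n => ε - if n < m then ε else 0) atTop (𝓝 ε) := by
    have h0 := hreg.tendsto_weightedAverage_of_eq_zero (a := fun n => if n < m then ε else 0)
      fun n hn => if_neg (not_lt.2 hn)
    have hsub := (tendsto_const_nhds (x := ε)).sub h0
    rw [sub_zero] at hsub
    refine hsub.congr' ?_
    filter_upwards [eventually_ne_atTop 0] with N hN
    rw [weightedAverage_sub, hreg.weightedAverage_const _ hN]
  have := le_of_tendsto_of_tendsto' hlim h fun N => weightedAverage_mono hreg.1 hge N
  linarith

/-- Tannery's theorem for weighted averages. -/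
lemma IsRegularSummation.tendsto_weightedAverage_tsum (hreg : IsRegularSummation s sbar)
    {w : ℕ → ℝ} (hw : Summable w) {c : ℕ → ℕ → ℝ} {C : ℝ} (hC : ∀ k n, |c k n| ≤ C)
    (h : ∀ k, Tendsto (weightedAverage s (c k)) atTop (𝓝 0)) :
    Tendsto (weightedAverage s fun n => ∑' k, w k * c k n) atTop (𝓝 0) := by
  have hsum : ∀ n, Summable fun k => w k * c k n := fun n =>
    (hw.abs.mul_right C).of_norm_bounded fun k => by
      rw [Real.norm_eq_abs, abs_mul]
      exact mul_le_mul_of_nonneg_left (hC k n) (abs_nonneg _)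
  have heq : weightedAverage s (fun n => ∑' k, w k * c k n)
      = fun N => ∑' k, w k * weightedAverage s (c k) N := by
    funext N
    simp only [weightedAverage, ← tsum_mul_left]
    rw [← Summable.tsum_finsetSum fun n _ => (hsum n).mul_left _, ← tsum_mul_left]
    congr 1
    funext k
    simp only [mul_sum]
    exact sum_congr rfl fun n _ => by ring
  rw [heq]
  have := tendsto_tsum_of_dominated_convergence (bound := fun k => |w k| * C)
    (f := fun N k => w k * weightedAverage s (c k) N) (g := fun _ => 0) (hw.abs.mul_right C)
    (fun k => by simpa using (h k).const_mul (w k)) ?_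
  · simpa using this
  filter_upwards [eventually_ne_atTop 0] with N hN k
  rw [Real.norm_eq_abs, abs_mul]
  exact mul_le_mul_of_nonneg_left (hreg.abs_weightedAverage_le (hC k) hN) (abs_nonneg _)

end WeightedAverage

section Integral

variable {X : Type*} [MeasurableSpace X] {μ : Measure X} {s : ℕ → ℕ → ℝ} {sbar : ℝ}

lemma integral_weightedAverage {F : ℕ → X → ℝ} (hF : ∀ n, Integrable (F n) μ) (N : ℕ) :
    ∫ x, weightedAverage s (fun n => F n x) N ∂μ
      = weightedAverage s (fun n => ∫ x, F n x ∂μ) N := by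
  simp only [weightedAverage]
  rw [integral_const_mul, integral_finsetSum _ fun n _ => (hF n).const_mul _]
  simp only [integral_const_mul]

lemma IsRegularSummation.tendsto_weightedAverage_integral_sq_sub
    (hreg : IsRegularSummation s sbar) {F : ℕ → X → ℝ} {G : X → ℝ}
    (hF : ∀ n, MemLp (F n) 2 μ) (hG : MemLp G 2 μ)
    (hsq : Tendsto (fun N => ∫ x, weightedAverage s (fun n => F n x ^ 2) N ∂μ) atTop
      (𝓝 (∫ x, G x ^ 2 ∂μ)))
    (hmul : Tendsto (fun N => ∫ x, weightedAverage s (fun n => F n x) N * G x ∂μ) atTop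
      (𝓝 (∫ x, G x ^ 2 ∂μ))) :
    Tendsto (weightedAverage s fun n => ∫ x, (F n x - G x) ^ 2 ∂μ) atTop (𝓝 0) := by
  have hFG : ∀ n, Integrable (fun x => F n x * G x) μ := fun n => (hF n).integrable_mul hG
  have hexpand : ∀ n, ∫ x, (F n x - G x) ^ 2 ∂μ
      = ∫ x, F n x ^ 2 ∂μ - 2 * ∫ x, F n x * G x ∂μ + ∫ x, G x ^ 2 ∂μ := by
    intro n
    have hint : Integrable (fun x => F n x ^ 2 - 2 * (F n x * G x)) μ :=
      (hF n).integrable_sq.sub ((hFG n).const_mul 2)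
    rw [← integral_const_mul, ← integral_sub (hF n).integrable_sq ((hFG n).const_mul 2),
      ← integral_add hint hG.integrable_sq]
    exact integral_congr_ae (Eventually.of_forall fun x => by simp only; ring)
  have hlim := (hsq.sub (hmul.const_mul 2)).add_const (∫ x, G x ^ 2 ∂μ)
  rw [show ∫ x, G x ^ 2 ∂μ - 2 * ∫ x, G x ^ 2 ∂μ + ∫ x, G x ^ 2 ∂μ = 0 by ring] at hlim
  refine hlim.congr' ?_
  filter_upwards [eventually_ne_atTop 0] with N hN
  simp_rw [← weightedAverage_mul_const]
  rw [integral_weightedAverage (fun n => (hF n).integrable_sq), integral_weightedAverage hFG,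
    ← hreg.weightedAverage_const (∫ x, G x ^ 2 ∂μ) hN, ← weightedAverage_const_mul,
    ← weightedAverage_sub, ← weightedAverage_add]
  simp only [hexpand]

lemma tendstoInMeasure_zero_of_tendsto_integral {f : ℕ → X → ℝ} (hf : ∀ n, Integrable (f n) μ)
    (hf0 : ∀ n, 0 ≤ᵐ[μ] f n) (h : Tendsto (fun n => ∫ x, f n x ∂μ) atTop (𝓝 0)) :
    TendstoInMeasure μ f atTop 0 := by
  refine tendstoInMeasure_of_tendsto_eLpNorm one_ne_zero (fun n => (hf n).1)
    aestronglyMeasurable_zero ?_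
  have heq : ∀ n, eLpNorm (f n - 0) 1 μ = ENNReal.ofReal (∫ x, f n x ∂μ) := by
    intro n
    rw [sub_zero, eLpNorm_one_eq_lintegral_enorm, ← ofReal_integral_norm_eq_lintegral_enorm (hf n)]
    congr 1
    refine integral_congr_ae ?_
    filter_upwards [hf0 n] with x hx
    exact Real.norm_of_nonneg hx
  simpa only [heq, ENNReal.ofReal_zero] using ENNReal.tendsto_ofReal h

end Integral

section Tent

open TopologicalSpace

variable (E : Type*) [PseudoMetricSpace E] [SeparableSpace E] [Nonempty E]

/-- The tent of height `1` and slope `m + 1` centred at `denseSeq E q`, where `k = Nat.pair q m`. -/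
noncomputable def tent (k : ℕ) (v : E) : ℝ :=
  max 0 (1 - (k.unpair.2 + 1) * dist v (denseSeq E k.unpair.1))

noncomputable def tentDist (v w : E) : ℝ :=
  ∑' k, (1 / 2 : ℝ) ^ k * (tent E k v - tent E k w) ^ 2

variable {E}

lemma continuous_tent (k : ℕ) : Continuous (tent E k) := by
  unfold tent
  fun_prop

lemma tent_nonneg (k : ℕ) (v : E) : 0 ≤ tent E k v := le_max_left _ _

lemma tent_le_one (k : ℕ) (v : E) : tent E k v ≤ 1 :=
  max_le zero_le_one (sub_le_self _ (by positivity))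

lemma tent_pos_iff {k : ℕ} {v : E} :
    0 < tent E k v ↔ dist v (denseSeq E k.unpair.1) < 1 / (k.unpair.2 + 1) := by
  rw [tent, lt_max_iff, lt_div_iff₀ (by positivity), sub_pos, mul_comm]
  simp

lemma hasCompactSupport_tent [ProperSpace E] (k : ℕ) : HasCompactSupport (tent E k) := by
  refine HasCompactSupport.intro (isCompact_closedBall (denseSeq E k.unpair.1)
    (1 / (k.unpair.2 + 1))) fun v hv => ?_
  refine le_antisymm (not_lt.1 fun hpos => hv ?_) (tent_nonneg k v)
  exact Metric.mem_closedBall.2 (tent_pos_iff.1 hpos).le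

lemma tendsto_of_forall_tendsto_tent {v : ℕ → E} {w : E}
    (h : ∀ k, Tendsto (fun j => tent E k (v j)) atTop (𝓝 (tent E k w))) :
    Tendsto v atTop (𝓝 w) := by
  rw [Metric.tendsto_nhds]
  intro ε hε
  obtain ⟨m, hm⟩ := exists_nat_one_div_lt (half_pos hε)
  obtain ⟨q, hq⟩ := (denseRange_denseSeq E).exists_dist_lt w
    (by positivity : (0 : ℝ) < 1 / (m + 1))
  have hk : (Nat.pair q m).unpair = (q, m) := Nat.unpair_pair q m
  have hw : 0 < tent E (Nat.pair q m) w := tent_pos_iff.2 (by rwa [hk])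
  filter_upwards [(h (Nat.pair q m)).eventually (lt_mem_nhds hw)] with j hj
  rw [tent_pos_iff, hk] at hj
  calc dist (v j) w ≤ dist (v j) (denseSeq E q) + dist w (denseSeq E q) := dist_triangle_right _ _ _
    _ < ε / 2 + ε / 2 := by simp only at hj; linarith
    _ = ε := add_halves ε

lemma sq_sub_tent_le_one (k : ℕ) (v w : E) : (tent E k v - tent E k w) ^ 2 ≤ 1 := by
  have := tent_nonneg k v; have := tent_le_one k v
  have := tent_nonneg k w; have := tent_le_one k w
  nlinarith

lemma tentDist_term_le (k : ℕ) (v w : E) :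
    ‖(1 / 2 : ℝ) ^ k * (tent E k v - tent E k w) ^ 2‖ ≤ (1 / 2 : ℝ) ^ k := by
  rw [Real.norm_of_nonneg (by positivity)]
  exact mul_le_of_le_one_right (by positivity) (sq_sub_tent_le_one k v w)

lemma summable_tentDist (v w : E) :
    Summable fun k => (1 / 2 : ℝ) ^ k * (tent E k v - tent E k w) ^ 2 :=
  summable_geometric_two.of_norm_bounded (tentDist_term_le · v w)

lemma tentDist_nonneg (v w : E) : 0 ≤ tentDist E v w :=
  tsum_nonneg fun _ => by positivity

lemma tentDist_le_two (v w : E) : tentDist E v w ≤ 2 :=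
  ((summable_tentDist v w).tsum_le_tsum
    (fun k => (Real.le_norm_self _).trans (tentDist_term_le k v w)) summable_geometric_two).trans_eq
    tsum_geometric_two

lemma continuous_tentDist : Continuous fun p : E × E => tentDist E p.1 p.2 :=
  continuous_tsum (fun k => by unfold tent; fun_prop) summable_geometric_two
    fun k p => tentDist_term_le k p.1 p.2

lemma tendsto_of_tendsto_tentDist {v : ℕ → E} {w : E}
    (h : Tendsto (fun j => tentDist E (v j) w) atTop (𝓝 0)) : Tendsto v atTop (𝓝 w) := by
  refine tendsto_of_forall_tendsto_tent fun k => ?_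
  have hsq : Tendsto (fun j => (tent E k (v j) - tent E k w) ^ 2) atTop (𝓝 0) := by
    refine squeeze_zero (fun j => sq_nonneg _) (fun j => ?_) (by simpa using h.const_mul (2 ^ k))
    have := (summable_tentDist (v j) w).le_tsum k fun _ _ => by positivity
    rw [tentDist]
    calc (tent E k (v j) - tent E k w) ^ 2
        = 2 ^ k * ((1 / 2 : ℝ) ^ k * (tent E k (v j) - tent E k w) ^ 2) := by
          rw [← mul_assoc, ← mul_pow]; norm_num
      _ ≤ _ := mul_le_mul_of_nonneg_left this (by positivity)
  rw [← tendsto_sub_nhds_zero_iff, tendsto_zero_iff_abs_tendsto_zero]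
  simpa [Function.comp_def, Real.sqrt_sq_eq_abs] using hsq.sqrt

end Tent

section TentIntegrals

variable {X : Type*} [MeasurableSpace X] {μ : Measure X} [IsFiniteMeasure μ]
  {E : Type*} [PseudoMetricSpace E] [TopologicalSpace.SeparableSpace E] [Nonempty E]

lemma memLp_tent_comp {H : X → E} (hH : AEStronglyMeasurable H μ) (k : ℕ) (p : ℝ≥0∞) :
    MemLp (fun x => tent E k (H x)) p μ :=
  .of_bound ((continuous_tent k).comp_aestronglyMeasurable hH) 1 (Eventually.of_forall fun x => by
    rw [Real.norm_of_nonneg (tent_nonneg k _)]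
    exact tent_le_one k _)

lemma integrable_tentDist_comp {F G : X → E} (hF : AEStronglyMeasurable F μ)
    (hG : AEStronglyMeasurable G μ) : Integrable (fun x => tentDist E (F x) (G x)) μ :=
  .of_bound (continuous_tentDist.comp_aestronglyMeasurable₂ hF hG) 2
    (Eventually.of_forall fun x => by
      rw [Real.norm_of_nonneg (tentDist_nonneg _ _)]
      exact tentDist_le_two _ _)

lemma integral_tentDist {F G : X → E} (hF : AEStronglyMeasurable F μ)
    (hG : AEStronglyMeasurable G μ) :
    ∫ x, tentDist E (F x) (G x) ∂μ
      = ∑' k, (1 / 2 : ℝ) ^ k * ∫ x, (tent E k (F x) - tent E k (G x)) ^ 2 ∂μ := by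
  have hint : ∀ k, Integrable
      (fun x => (1 / 2 : ℝ) ^ k * (tent E k (F x) - tent E k (G x)) ^ 2) μ := fun k =>
    (((memLp_tent_comp hF k 2).sub (memLp_tent_comp hG k 2)).integrable_sq).const_mul _
  simp_rw [← integral_const_mul]
  refine (integral_tsum_of_summable_integral_norm hint ?_).symm
  refine (summable_geometric_two.mul_right (μ.real Set.univ)).of_nonneg_of_le
    (fun k => integral_nonneg fun x => norm_nonneg _) fun k => ?_
  exact (Real.le_norm_self _).trans (norm_integral_le_of_norm_le_const (Eventually.of_forall
    fun x => (norm_norm _).trans_le (tentDist_term_le k (F x) (G x))))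

lemma IsRegularSummation.tendsto_weightedAverage_integral_tentDist [ProperSpace E]
    {s : ℕ → ℕ → ℝ} {sbar : ℝ} (hreg : IsRegularSummation s sbar) {F : ℕ → X → E} {G : X → E}
    (hF : ∀ n, AEStronglyMeasurable (F n) μ) (hG : AEStronglyMeasurable G μ)
    (havg : ∀ b : E → ℝ, Continuous b → HasCompactSupport b → ∀ g : X → ℝ, Integrable g μ →
      Tendsto (fun N => ∫ x, weightedAverage s (fun n => b (F n x)) N * g x ∂μ) atTop
        (𝓝 (∫ x, b (G x) * g x ∂μ))) :
    Tendsto (weightedAverage s fun n => ∫ x, tentDist E (F n x) (G x) ∂μ) atTop (𝓝 0) := by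
  have htent : ∀ k, Tendsto (weightedAverage s fun n =>
      ∫ x, (tent E k (F n x) - tent E k (G x)) ^ 2 ∂μ) atTop (𝓝 0) := by
    intro k
    have hsq := havg (fun v => tent E k v ^ 2) ((continuous_tent k).pow 2)
      ((hasCompactSupport_tent k).comp_left (g := fun t => t ^ 2) (zero_pow two_ne_zero))
      _ (integrable_const 1)
    have hmul := havg (tent E k) (continuous_tent k) (hasCompactSupport_tent k) _
      ((memLp_tent_comp hG k 1).integrable le_rfl)
    exact hreg.tendsto_weightedAverage_integral_sq_sub (fun n => memLp_tent_comp (hF n) k 2)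
      (memLp_tent_comp hG k 2) (by simpa using hsq) (by simpa [sq] using hmul)
  simp_rw [integral_tentDist (hF _) hG]
  refine hreg.tendsto_weightedAverage_tsum summable_geometric_two (C := μ.real Set.univ)
    (fun k n => ?_) htent
  simpa using norm_integral_le_of_norm_le_const (μ := μ) (Eventually.of_forall fun x =>
    (Real.norm_of_nonneg (sq_nonneg _)).trans_le (sq_sub_tent_le_one k (F n x) (G x)))

lemma exists_subseq_ae_tendsto_of_tendsto_integral_tentDist {F : ℕ → X → E} {G : X → E}
    (hF : ∀ n, AEStronglyMeasurable (F n) μ) (hG : AEStronglyMeasurable G μ)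
    (h : Tendsto (fun n => ∫ x, tentDist E (F n x) (G x) ∂μ) atTop (𝓝 0)) :
    ∃ ψ : ℕ → ℕ, StrictMono ψ ∧ ∀ᵐ x ∂μ, Tendsto (fun j => F (ψ j) x) atTop (𝓝 (G x)) := by
  obtain ⟨ψ, hψ, hae⟩ := (tendstoInMeasure_zero_of_tendsto_integral
    (fun n => integrable_tentDist_comp (hF n) hG)
    (fun n => Eventually.of_forall fun x => tentDist_nonneg _ _) h).exists_seq_tendsto_ae
  refine ⟨ψ, hψ, ?_⟩
  filter_upwards [hae] with x hx
  exact tendsto_of_tendsto_tentDist hx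

end TentIntegrals

section UniformIntegrability

variable {X : Type*} [MeasurableSpace X] {μ : Measure X}

lemma eLpNorm_one_indicator_eq {E : Type*} [NormedAddCommGroup E] {f : X → E}
    (hf : Integrable f μ) {s : Set X} (hs : MeasurableSet s) :
    eLpNorm (s.indicator f) 1 μ = ENNReal.ofReal (∫ x in s, ‖f x‖ ∂μ) := by
  rw [eLpNorm_indicator_eq_eLpNorm_restrict hs, eLpNorm_one_eq_lintegral_enorm,
    ofReal_integral_norm_eq_lintegral_enorm hf.integrableOn]

lemma unifIntegrable_one_iff {ι E : Type*} [NormedAddCommGroup E] {f : ι → X → E}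
    (hf : ∀ i, Integrable (f i) μ) :
    UnifIntegrable f 1 μ ↔ ∀ ε > 0, ∃ δ > 0, ∀ i s, MeasurableSet s →
      μ s ≤ ENNReal.ofReal δ → ∫ x in s, ‖f i x‖ ∂μ ≤ ε := by
  unfold UnifIntegrable
  refine forall₂_congr fun ε hε => exists_congr fun δ => ?_
  rw [exists_prop, gt_iff_lt]
  refine and_congr_right fun _ => forall₄_congr fun i s hs _ => ?_
  rw [eLpNorm_one_indicator_eq (hf i) hs, ENNReal.ofReal_le_ofReal_iff hε.le]

lemma exists_forall_le_abs_setIntegral_le {f : ℕ → X → ℝ} (hf : ∀ n, Integrable (f n) μ)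
    (k : ℕ) {ε : ℝ} (hε : 0 < ε) :
    ∃ δ > 0, ∀ n ≤ k, ∀ A, MeasurableSet A → μ A ≤ ENNReal.ofReal δ →
      |∫ x in A, f n x ∂μ| ≤ ε := by
  obtain ⟨δ, hδ, h⟩ := (unifIntegrable_one_iff fun n : Fin (k + 1) => hf n).1
    (unifIntegrable_finite le_rfl ENNReal.one_ne_top fun n => memLp_one_iff_integrable.2 (hf n))
    ε hε
  refine ⟨δ, hδ, fun n hn A hA hμA => abs_integral_le_integral_abs.trans ?_⟩
  simpa [Nat.mod_eq_of_lt (Nat.lt_succ_of_le hn)] using h ⟨n, Nat.lt_succ_of_le hn⟩ A hA hμA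

theorem MeasureTheory.Lp.isClosed_setOf_ae_mem {E : Type*} [NormedAddCommGroup E]
    {p : ℝ≥0∞} [Fact (1 ≤ p)] {K : Set E} (hK : IsClosed K) :
    IsClosed {g : Lp E p μ | ∀ᵐ x ∂μ, g x ∈ K} := by
  refine IsSeqClosed.isClosed fun g g₀ hg hlim => ?_
  obtain ⟨φ, -, hφ⟩ := (tendstoInMeasure_of_tendsto_Lp hlim).exists_seq_tendsto_ae
  filter_upwards [ae_all_iff.2 hg, hφ] with x hx hφx
  exact hK.mem_of_tendsto hφx (Eventually.of_forall fun j => hx (φ j))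

lemma norm_setIntegral_sub_setIntegral_le {E : Type*} [NormedAddCommGroup E] [NormedSpace ℝ E]
    {f : X → E} (hf : Integrable f μ) {A B : Set X} (hA : MeasurableSet A)
    (hB : MeasurableSet B) :
    ‖∫ x in A, f x ∂μ - ∫ x in B, f x ∂μ‖ ≤ ∫ x in symmDiff A B, ‖f x‖ ∂μ := by
  rw [← integral_inter_add_sdiff hB (hf.integrableOn (s := A)),
    ← integral_inter_add_sdiff hA (hf.integrableOn (s := B)), Set.inter_comm B A,
    add_sub_add_left_eq_sub, Set.symmDiff_def,
    setIntegral_union disjoint_sdiff_sdiff (hB.diff hA) hf.norm.integrableOn hf.norm.integrableOn]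
  exact (norm_sub_le _ _).trans (add_le_add (norm_integral_le_integral_norm _)
    (norm_integral_le_integral_norm _))

lemma setIntegral_abs_le_of_forall_subset {f : X → ℝ} (hf : Integrable f μ) {A : Set X}
    (hA : MeasurableSet A) {ε : ℝ}
    (h : ∀ B ⊆ A, MeasurableSet B → |∫ x in B, f x ∂μ| ≤ ε) :
    ∫ x in A, |f x| ∂μ ≤ 2 * ε := by
  set g := hf.aestronglyMeasurable.mk f
  have hfg : f =ᵐ[μ] g := hf.aestronglyMeasurable.ae_eq_mk
  have hP : MeasurableSet {x | 0 ≤ g x} :=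
    measurableSet_le measurable_const hf.aestronglyMeasurable.stronglyMeasurable_mk.measurable
  have hpos : ∫ x in A ∩ {x | 0 ≤ g x}, |f x| ∂μ = ∫ x in A ∩ {x | 0 ≤ g x}, f x ∂μ := by
    refine setIntegral_congr_ae (hA.inter hP) ?_
    filter_upwards [hfg] with x hx hxP
    rw [abs_of_nonneg (hx ▸ hxP.2)]
  have hneg : ∫ x in A \ {x | 0 ≤ g x}, |f x| ∂μ = -∫ x in A \ {x | 0 ≤ g x}, f x ∂μ := by
    rw [← integral_neg]
    refine setIntegral_congr_ae (hA.diff hP) ?_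
    filter_upwards [hfg] with x hx hxN
    rw [abs_of_neg (hx ▸ not_le.1 hxN.2)]
  rw [← integral_inter_add_sdiff hP hf.abs.integrableOn, hpos, hneg, two_mul]
  have h₁ := abs_le.1 (h _ Set.inter_subset_left (hA.inter hP))
  have h₂ := abs_le.1 (h _ Set.sdiff_subset (hA.diff hP))
  linarith

lemma exists_isOpen_forall_dist_le_of_cauchySeq {Z Y : Type*} [TopologicalSpace Z] [BaireSpace Z]
    [Nonempty Z] [PseudoMetricSpace Y] {Λ : ℕ → Z → Y} (hΛ : ∀ n, Continuous (Λ n))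
    (hcauchy : ∀ z, CauchySeq fun n => Λ n z) {ε : ℝ} (hε : 0 < ε) :
    ∃ k, ∃ V : Set Z, IsOpen V ∧ V.Nonempty ∧
      ∀ z ∈ V, ∀ m ≥ k, ∀ n ≥ k, dist (Λ m z) (Λ n z) ≤ ε := by
  set F : ℕ → Set Z := fun k => {z | ∀ m ≥ k, ∀ n ≥ k, dist (Λ m z) (Λ n z) ≤ ε}
  have hF : ∀ k, IsClosed (F k) := fun k => by
    simp only [F, Set.ofPred_forall]
    exact isClosed_iInter fun m => isClosed_iInter fun _ => isClosed_iInter fun n =>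
      isClosed_iInter fun _ => isClosed_le ((hΛ m).dist (hΛ n)) continuous_const
  have hcover : ⋃ k, F k = Set.univ := Set.eq_univ_of_forall fun z => by
    obtain ⟨k, hk⟩ := Metric.cauchySeq_iff'.1 (hcauchy z) (ε / 2) (half_pos hε)
    refine Set.mem_iUnion.2 ⟨k, fun m hm n hn => ?_⟩
    have := dist_triangle_right (Λ m z) (Λ n z) (Λ k z)
    linarith [hk m hm, hk n hn]
  obtain ⟨k, hk⟩ := nonempty_interior_of_iUnion_of_closed hF hcover
  exact ⟨k, interior (F k), isOpen_interior, hk, fun z hz => interior_subset hz⟩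

end UniformIntegrability

section VitaliHahnSaks

variable {X : Type*} [MeasurableSpace X] {μ : Measure X}

/-- With the `L¹` distance, this is the complete metric space of measurable sets modulo null sets,
`d(A, B) = μ (A ∆ B)`. -/
def indicatorSets (μ : Measure X) : Set (Lp ℝ 1 μ) :=
  {g | ∀ᵐ x ∂μ, g x ∈ ({0, 1} : Set ℝ)}

lemma isClosed_indicatorSets : IsClosed (indicatorSets μ) :=
  Lp.isClosed_setOf_ae_mem (Set.toFinite _).isClosed

variable [IsFiniteMeasure μ]

lemma indicatorConstLp_mem_indicatorSets {A : Set X} (hA : MeasurableSet A) :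
    indicatorConstLp 1 hA (measure_ne_top μ A) (1 : ℝ) ∈ indicatorSets μ := by
  filter_upwards [indicatorConstLp_coeFn (p := 1) (hs := hA) (hμs := measure_ne_top μ A)
    (c := (1 : ℝ))] with x hx
  rw [hx]
  by_cases hxA : x ∈ A <;> simp [hxA]

lemma exists_eq_indicatorConstLp {g : Lp ℝ 1 μ} (hg : g ∈ indicatorSets μ) :
    ∃ A, ∃ hA : MeasurableSet A, g = indicatorConstLp 1 hA (measure_ne_top μ A) 1 := by
  have hA : MeasurableSet {x | g x = 1} :=
    (Lp.stronglyMeasurable g).measurable (measurableSet_singleton 1)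
  refine ⟨_, hA, Lp.ext ?_⟩
  filter_upwards [hg, indicatorConstLp_coeFn (p := 1) (hs := hA) (hμs := measure_ne_top μ _)
    (c := (1 : ℝ))] with x hx hind
  rw [hind]
  simp only [Set.mem_insert_iff, Set.mem_singleton_iff] at hx
  rcases hx with hx | hx <;> simp [hx]

lemma dist_indicatorConstLp_one {A B : Set X} (hA : MeasurableSet A) (hB : MeasurableSet B) :
    dist (indicatorConstLp 1 hA (measure_ne_top μ A) (1 : ℝ))
      (indicatorConstLp 1 hB (measure_ne_top μ B) 1) = μ.real (symmDiff A B) := by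
  rw [dist_indicatorConstLp_eq_norm, norm_indicatorConstLp one_ne_zero ENNReal.one_ne_top]
  simp

lemma integral_indicatorConstLp_one_mul {A : Set X} (hA : MeasurableSet A) (f : X → ℝ) :
    ∫ x, indicatorConstLp 1 hA (measure_ne_top μ A) (1 : ℝ) x * f x ∂μ = ∫ x in A, f x ∂μ := by
  rw [← integral_indicator hA]
  refine integral_congr_ae ?_
  filter_upwards [indicatorConstLp_coeFn (p := 1) (hs := hA) (hμs := measure_ne_top μ A)
    (c := (1 : ℝ))] with x hx
  rw [hx]
  by_cases hxA : x ∈ A <;> simp [hxA]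

lemma continuous_integral_mul_indicatorSets {f : X → ℝ} (hf : Integrable f μ) :
    Continuous fun g : indicatorSets μ => ∫ x, (g : Lp ℝ 1 μ) x * f x ∂μ := by
  rw [Metric.continuous_iff]
  rintro ⟨g, hg⟩ ε hε
  obtain ⟨δ, hδ, hsmall⟩ := (unifIntegrable_one_iff fun _ : Unit => hf).1
    (unifIntegrable_const le_rfl ENNReal.one_ne_top (memLp_one_iff_integrable.2 hf)) (ε / 2)
    (half_pos hε)
  refine ⟨δ, hδ, fun ⟨g', hg'⟩ hdist => ?_⟩
  obtain ⟨A, hA, rfl⟩ := exists_eq_indicatorConstLp hg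
  obtain ⟨B, hB, rfl⟩ := exists_eq_indicatorConstLp hg'
  rw [Subtype.dist_eq, dist_indicatorConstLp_one] at hdist
  simp only [integral_indicatorConstLp_one_mul, Real.dist_eq]
  calc |∫ x in B, f x ∂μ - ∫ x in A, f x ∂μ| ≤ ∫ x in symmDiff B A, ‖f x‖ ∂μ :=
        norm_setIntegral_sub_setIntegral_le hf hB hA
    _ ≤ ε / 2 := hsmall () _ (hB.symmDiff hA)
        ((ENNReal.le_ofReal_iff_toReal_le (measure_ne_top μ _) hδ.le).2 hdist.le)
    _ < ε := half_lt_self hε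

lemma exists_ball_forall_abs_setIntegral_sub_le {f : ℕ → X → ℝ} (hf : ∀ n, Integrable (f n) μ)
    (hcauchy : ∀ A, MeasurableSet A → CauchySeq fun n => ∫ x in A, f n x ∂μ) {ε : ℝ}
    (hε : 0 < ε) :
    ∃ k A₀, MeasurableSet A₀ ∧ ∃ r > 0, ∀ B, MeasurableSet B → μ.real (symmDiff B A₀) < r →
      ∀ m ≥ k, ∀ m' ≥ k, |∫ x in B, f m x ∂μ - ∫ x in B, f m' x ∂μ| ≤ ε := by
  have : CompleteSpace (indicatorSets μ) := isClosed_indicatorSets.completeSpace_coe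
  have : Nonempty (indicatorSets μ) :=
    ⟨⟨_, indicatorConstLp_mem_indicatorSets MeasurableSet.empty⟩⟩
  set Λ : ℕ → indicatorSets μ → ℝ := fun n g => ∫ x, (g : Lp ℝ 1 μ) x * f n x ∂μ
  have hΛ : ∀ n {A} (hA : MeasurableSet A),
      Λ n ⟨_, indicatorConstLp_mem_indicatorSets hA⟩ = ∫ x in A, f n x ∂μ :=
    fun n _ hA => integral_indicatorConstLp_one_mul hA (f n)
  obtain ⟨k, V, hV, ⟨⟨g₀, hg₀⟩, hg₀V⟩, hVcauchy⟩ :=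
    exists_isOpen_forall_dist_le_of_cauchySeq (Λ := Λ)
      (fun n => continuous_integral_mul_indicatorSets (hf n))
      (fun ⟨g, hg⟩ => by
        obtain ⟨A, hA, rfl⟩ := exists_eq_indicatorConstLp hg
        simpa only [hΛ] using hcauchy A hA)
      hε
  obtain ⟨r, hr, hball⟩ := Metric.isOpen_iff.1 hV _ hg₀V
  obtain ⟨A₀, hA₀, rfl⟩ := exists_eq_indicatorConstLp hg₀
  refine ⟨k, A₀, hA₀, r, hr, fun B hB hBr m hm m' hm' => ?_⟩
  have hmem : (⟨_, indicatorConstLp_mem_indicatorSets hB⟩ : indicatorSets μ) ∈ V := by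
    refine hball ?_
    rwa [Metric.mem_ball, Subtype.dist_eq, dist_indicatorConstLp_one]
  simpa only [hΛ, Real.dist_eq] using hVcauchy _ hmem m hm m' hm'

/-- A small set `A` is the difference of `A₀ ∪ A` and `A₀ \ A`, which both lie in the ball around
`A₀` on which the set integrals are uniformly Cauchy. -/
lemma exists_forall_abs_setIntegral_le {f : ℕ → X → ℝ} (hf : ∀ n, Integrable (f n) μ)
    (hcauchy : ∀ A, MeasurableSet A → CauchySeq fun n => ∫ x in A, f n x ∂μ) {ε : ℝ}
    (hε : 0 < ε) :
    ∃ δ > 0, ∀ n A, MeasurableSet A → μ A ≤ ENNReal.ofReal δ → |∫ x in A, f n x ∂μ| ≤ ε := by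
  obtain ⟨k, A₀, hA₀, r, hr, hnear⟩ :=
    exists_ball_forall_abs_setIntegral_sub_le hf hcauchy (by positivity : 0 < ε / 3)
  obtain ⟨δ₀, hδ₀, hsmall⟩ := exists_forall_le_abs_setIntegral_le hf k (by positivity : 0 < ε / 3)
  refine ⟨min δ₀ (r / 2), by positivity, fun n A hA hμA => ?_⟩
  have hAδ₀ : μ A ≤ ENNReal.ofReal δ₀ := hμA.trans (ENNReal.ofReal_le_ofReal (min_le_left _ _))
  rcases le_or_gt n k with hn | hn
  · exact (hsmall n hn A hA hAδ₀).trans (by linarith)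
  have hAr : μ.real A < r := (ENNReal.toReal_le_of_le_ofReal (by positivity)
    (hμA.trans (ENNReal.ofReal_le_ofReal (min_le_right _ _)))).trans_lt (half_lt_self hr)
  have hclose : ∀ {B}, MeasurableSet B → symmDiff B A₀ ⊆ A →
      |∫ x in B, f n x ∂μ - ∫ x in B, f k x ∂μ| ≤ ε / 3 := fun hB hBA =>
    hnear _ hB ((measureReal_mono hBA).trans_lt hAr) n hn.le k le_rfl
  have hsplit : ∀ m, ∫ x in A, f m x ∂μ = ∫ x in A₀ ∪ A, f m x ∂μ - ∫ x in A₀ \ A, f m x ∂μ := by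
    intro m
    rw [← Set.sdiff_union_self, setIntegral_union Set.disjoint_sdiff_left hA (hf m).integrableOn
      (hf m).integrableOn]
    ring
  have h₁ := abs_le.1 (hclose (hA₀.union hA) fun x => by simp [Set.mem_symmDiff]; tauto)
  have h₂ := abs_le.1 (hclose (hA₀.diff hA) fun x => by simp [Set.mem_symmDiff]; tauto)
  have h₃ := abs_le.1 (hsmall k le_rfl A hA hAδ₀)
  rw [hsplit n]
  rw [hsplit k] at h₃
  exact abs_le.2 ⟨by linarith, by linarith⟩

/-- The Vitali–Hahn–Saks theorem. -/
theorem unifIntegrable_of_cauchySeq_setIntegral {f : ℕ → X → ℝ} (hf : ∀ n, Integrable (f n) μ)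
    (hcauchy : ∀ A, MeasurableSet A → CauchySeq fun n => ∫ x in A, f n x ∂μ) :
    UnifIntegrable f 1 μ := by
  refine (unifIntegrable_one_iff hf).2 fun ε hε => ?_
  obtain ⟨δ, hδ, h⟩ := exists_forall_abs_setIntegral_le hf hcauchy (half_pos hε)
  refine ⟨δ, hδ, fun n A hA hμA => ?_⟩
  simpa only [Real.norm_eq_abs, mul_div_cancel₀ ε two_ne_zero] using
    setIntegral_abs_le_of_forall_subset (hf n) hA fun B hBA hB =>
      h n B hB ((measure_mono hBA).trans hμA)

end VitaliHahnSaks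

section WeakConvergence

variable {X : Type*} [MeasurableSpace X] {μ : Measure X}

lemma EuclideanSpace.norm_le_sum_abs {ι : Type*} [Fintype ι] (v : EuclideanSpace ℝ ι) :
    ‖v‖ ≤ ∑ i, |v i| := by
  classical
  calc ‖v‖ = ‖∑ i, EuclideanSpace.single i (v i)‖ := by
        congr 1
        ext j
        simp
    _ ≤ ∑ i, ‖EuclideanSpace.single i (v i)‖ := norm_sum_le _ _
    _ = ∑ i, |v i| := by simp

lemma unifIntegrable_of_forall_apply {κ ι : Type*} [Fintype ι] {f : κ → X → EuclideanSpace ℝ ι}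
    (hf : ∀ n, Integrable (f n) μ) (hcoord : ∀ i, UnifIntegrable (fun n x => f n x i) 1 μ) :
    UnifIntegrable f 1 μ := by
  have hfi : ∀ i n, Integrable (fun x => f n x i) μ := fun i n =>
    (EuclideanSpace.proj i : EuclideanSpace ℝ ι →L[ℝ] ℝ).integrable_comp (hf n)
  rw [unifIntegrable_one_iff hf]
  intro ε hε
  set ε' := ε / (Fintype.card ι + 1)
  have hev : ∀ i, ∀ᶠ δ in 𝓝[>] (0 : ℝ), ∀ n s, MeasurableSet s → μ s ≤ ENNReal.ofReal δ →
      ∫ x in s, |f n x i| ∂μ ≤ ε' := by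
    intro i
    obtain ⟨δ₀, hδ₀, h⟩ := (unifIntegrable_one_iff (hfi i)).1 (hcoord i) ε' (by positivity)
    filter_upwards [Ioo_mem_nhdsGT hδ₀] with δ hδ n s hs hμs
    simpa only [Real.norm_eq_abs] using
      h n s hs (hμs.trans (ENNReal.ofReal_le_ofReal hδ.2.le))
  obtain ⟨δ, hδ, hδpos⟩ := ((eventually_all.2 hev).and self_mem_nhdsWithin).exists
  refine ⟨δ, hδpos, fun n s hs hμs => ?_⟩
  calc ∫ x in s, ‖f n x‖ ∂μ ≤ ∫ x in s, ∑ i, |f n x i| ∂μ :=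
        integral_mono (hf n).norm.integrableOn
          (integrable_finsetSum _ fun i _ => (hfi i n).abs.integrableOn)
          fun x => EuclideanSpace.norm_le_sum_abs _
    _ = ∑ i, ∫ x in s, |f n x i| ∂μ :=
        integral_finsetSum _ fun i _ => (hfi i n).abs.integrableOn
    _ ≤ ∑ _i : ι, ε' := sum_le_sum fun i _ => hδ i n s hs hμs
    _ ≤ ε := by
        rw [sum_const, card_univ, nsmul_eq_mul, ← mul_div_assoc, div_le_iff₀ (by positivity)]
        nlinarith

lemma integral_inner_indicator_single {ι : Type*} [Fintype ι] [DecidableEq ι]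
    (V : X → EuclideanSpace ℝ ι) (i : ι) {A : Set X} (hA : MeasurableSet A) :
    ∫ x, ⟪V x, A.indicator (fun _ => EuclideanSpace.single i (1 : ℝ)) x⟫ ∂μ
      = ∫ x in A, V x i ∂μ := by
  rw [← integral_indicator hA]
  congr 1
  ext x
  by_cases hx : x ∈ A <;> simp [hx, EuclideanSpace.inner_single_right]

lemma unifIntegrable_of_tendsto_integral_inner [IsFiniteMeasure μ] {ι : Type*} [Fintype ι]
    {f : ℕ → X → EuclideanSpace ℝ ι} {g : X → EuclideanSpace ℝ ι} (hf : ∀ n, Integrable (f n) μ)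
    (hweak : ∀ h : X → EuclideanSpace ℝ ι, Measurable h → (∃ C : ℝ, ∀ᵐ x ∂μ, ‖h x‖ ≤ C) →
      Tendsto (fun n => ∫ x, ⟪f n x, h x⟫ ∂μ) atTop (𝓝 (∫ x, ⟪g x, h x⟫ ∂μ))) :
    UnifIntegrable f 1 μ := by
  classical
  refine unifIntegrable_of_forall_apply hf fun i => unifIntegrable_of_cauchySeq_setIntegral
    (fun n => (EuclideanSpace.proj i : EuclideanSpace ℝ ι →L[ℝ] ℝ).integrable_comp (hf n))
    fun A hA => ?_
  have hbound : ∃ C : ℝ, ∀ᵐ x ∂μ, ‖A.indicator (fun _ => EuclideanSpace.single i (1 : ℝ)) x‖ ≤ C :=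
    ⟨1, Eventually.of_forall fun x => (norm_indicator_le_norm_self _ x).trans (by simp)⟩
  have := hweak _ (measurable_const.indicator hA) hbound
  simp only [integral_inner_indicator_single _ i hA] at this
  exact this.cauchySeq

lemma tendsto_integral_norm_sub_of_ae_tendsto [IsFiniteMeasure μ] {E : Type*}
    [NormedAddCommGroup E] {f : ℕ → X → E} {g : X → E} (hf : ∀ n, AEStronglyMeasurable (f n) μ)
    (hg : Integrable g μ) (hui : UnifIntegrable f 1 μ)
    (hfg : ∀ᵐ x ∂μ, Tendsto (fun n => f n x) atTop (𝓝 (g x))) :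
    Tendsto (fun n => ∫ x, ‖f n x - g x‖ ∂μ) atTop (𝓝 0) := by
  have hLp := tendsto_Lp_finite_of_tendstoInMeasure le_rfl ENNReal.one_ne_top hf
    (memLp_one_iff_integrable.2 hg) hui (tendstoInMeasure_of_tendsto_ae hf hfg)
  have heq : ∀ n, ∫ x, ‖f n x - g x‖ ∂μ = (eLpNorm (f n - g) 1 μ).toReal := fun n => by
    rw [eLpNorm_one_eq_lintegral_enorm, ← integral_norm_eq_lintegral_enorm ((hf n).sub hg.1)]
    rfl
  simpa [heq, Function.comp_def] using (ENNReal.tendsto_toReal ENNReal.zero_ne_top).comp hLp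

end WeakConvergence

theorem strong_L1_subsequence_of_weighted_averages_general
    {D : ℕ} (Q : Set (EuclideanSpace ℝ (Fin D)))
    (hQbdd : Bornology.IsBounded Q)
    (U : ℕ → EuclideanSpace ℝ (Fin D) → EuclideanSpace ℝ (Fin D))
    (Ulim : EuclideanSpace ℝ (Fin D) → EuclideanSpace ℝ (Fin D))
    (hUint : ∀ n, Integrable (U n) (volume.restrict Q))
    (hUlimint : Integrable Ulim (volume.restrict Q))
    (hweak : ∀ g : EuclideanSpace ℝ (Fin D) → EuclideanSpace ℝ (Fin D),
      Measurable g → (∃ Cg : ℝ, ∀ᵐ x ∂(volume.restrict Q), ‖g x‖ ≤ Cg) →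
      Filter.Tendsto (fun n : ℕ => ∫ x in Q, ⟪U n x, g x⟫) Filter.atTop
        (nhds (∫ x in Q, ⟪Ulim x, g x⟫)))
    (s : ℕ → ℕ → ℝ) (sbar : ℝ) (hreg : IsRegularSummation s sbar)
    (havg : ∀ b : EuclideanSpace ℝ (Fin D) → ℝ, Continuous b → HasCompactSupport b →
      ∀ g : EuclideanSpace ℝ (Fin D) → ℝ, Integrable g (volume.restrict Q) →
        Filter.Tendsto (fun N : ℕ =>
            ∫ x in Q, ((1 / (N : ℝ)) * ∑ n ∈ Finset.Icc 1 N, s n N * b (U n x)) * g x)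
          Filter.atTop (nhds (∫ x in Q, b (Ulim x) * g x))) :
    ∃ φ : ℕ → ℕ, StrictMono φ ∧
      Filter.Tendsto (fun j : ℕ => ∫ x in Q, ‖U (φ j) x - Ulim x‖)
        Filter.atTop (nhds 0) := by
  have : IsFiniteMeasure (volume.restrict Q) :=
    isFiniteMeasure_restrict.2 hQbdd.measure_lt_top.ne
  have hU : ∀ n, AEStronglyMeasurable (U n) (volume.restrict Q) := fun n => (hUint n).1
  obtain ⟨φ, hφ, hφdist⟩ := (hreg.mapClusterPt_zero
    (fun n => integral_nonneg fun x => tentDist_nonneg _ _)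
    (hreg.tendsto_weightedAverage_integral_tentDist hU hUlimint.1 havg)).tendsto_subseq
  obtain ⟨ψ, hψ, hae⟩ :=
    exists_subseq_ae_tendsto_of_tendsto_integral_tentDist (fun n => hU (φ n)) hUlimint.1 hφdist
  have hui : UnifIntegrable (fun j => U (φ (ψ j))) 1 (volume.restrict Q) :=
    unifIntegrable_of_tendsto_integral_inner (fun j => hUint _) fun g hg hgC =>
      (hweak g hg hgC).comp (hφ.comp hψ).tendsto_atTop
  exact ⟨φ ∘ ψ, hφ.comp hψ,
    tendsto_integral_norm_sub_of_ae_tendsto (fun j => hU _) hUlimint hui hae⟩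

/-- Lemma 3.8 of the paper: if `U_n → U` weakly in `L¹(Q; ℝ^D)` and for some regular
summation method the weighted averages `(1/N) ∑_{n=1}^N s_{n,N} b(U_n)` converge
weakly-* in `L^∞(Q)` to `b(U)` for every `b ∈ C_c(ℝ^D)`, then some subsequence of
`U_n` converges to `U` strongly in `L¹(Q; ℝ^D)`. -/
theorem strong_L1_subsequence_of_weighted_averages
    {D : ℕ} (Q : Set (EuclideanSpace ℝ (Fin D)))
    (hQopen : IsOpen Q) (hQbdd : Bornology.IsBounded Q)
    (U : ℕ → EuclideanSpace ℝ (Fin D) → EuclideanSpace ℝ (Fin D))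
    (Ulim : EuclideanSpace ℝ (Fin D) → EuclideanSpace ℝ (Fin D))
    (hUmeas : ∀ n, Measurable (U n))
    (hUint : ∀ n, Integrable (U n) (volume.restrict Q))
    (hUlimint : Integrable Ulim (volume.restrict Q))
    (hweak : ∀ g : EuclideanSpace ℝ (Fin D) → EuclideanSpace ℝ (Fin D),
      Measurable g → (∃ Cg : ℝ, ∀ᵐ x ∂(volume.restrict Q), ‖g x‖ ≤ Cg) →
      Filter.Tendsto (fun n : ℕ => ∫ x in Q, ⟪U n x, g x⟫) Filter.atTop
        (nhds (∫ x in Q, ⟪Ulim x, g x⟫)))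
    (s : ℕ → ℕ → ℝ) (sbar : ℝ) (hreg : IsRegularSummation s sbar)
    (havg : ∀ b : EuclideanSpace ℝ (Fin D) → ℝ, Continuous b → HasCompactSupport b →
      ∀ g : EuclideanSpace ℝ (Fin D) → ℝ, Integrable g (volume.restrict Q) →
        Filter.Tendsto (fun N : ℕ =>
            ∫ x in Q, ((1 / (N : ℝ)) * ∑ n ∈ Finset.Icc 1 N, s n N * b (U n x)) * g x)
          Filter.atTop (nhds (∫ x in Q, b (Ulim x) * g x))) :
    ∃ φ : ℕ → ℕ, StrictMono φ ∧
      Filter.Tendsto (fun j : ℕ => ∫ x in Q, ‖U (φ j) x - Ulim x‖)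
        Filter.atTop (nhds 0) :=
  strong_L1_subsequence_of_weighted_averages_general Q hQbdd U Ulim hUint hUlimint hweak s sbar hreg
    havg
end

section
/- Let Q ⊂ ℝ^D be a bounded domain, {s_{n,N}} a regular summation method with bound s̄, and V_n, V ∈ L^∞(Q) with max{ sup_n ‖V_n‖_{L^∞(Q)}, ‖V‖_{L^∞(Q)} } ≤ M. For ε > 0 and N ∈ ℕ set K_N(ε) = { (n,m) : n, m ≤ N, s_{n,N} s_{m,N} |∫_Q (V_n − V)(V_m − V) dx| ≥ ε }. Then for every N and every ε > 0: ∫_Q | (1/N) Σ_{n=1}^N s_{n,N} (V_n − V) |² dx ≤ 4 s̄² |Q| M² · (#K_N(ε))/N² + ε, where |Q| denotes the Lebesgue measure of Q. -/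
open MeasureTheory Finset

/-!
Expanding the square, the left-hand side is `N⁻² ∑_{n,m ≤ N} s_{n,N} s_{m,N} ∫_Q f_n f_m` with
`f_n = V_n − V`. Since `|f_n| ≤ 2M`, every one of these `N²` terms is at most `4 s̄² |Q| M²`, and a
term outside `K_N(ε)` is less than `ε`.
-/

theorem sum_le_card_filter_le_abs_mul_add_card_mul {ι : Type*} (T : Finset ι) (x : ι → ℝ)
    {C ε : ℝ} (hC : ∀ p ∈ T, x p ≤ C) (hε : 0 ≤ ε) :
    ∑ p ∈ T, x p ≤ #{p ∈ T | ε ≤ |x p|} * C + #T * ε := by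
  rw [← sum_filter_add_sum_filter_not T (fun p => ε ≤ |x p|)]
  have hlarge : ∑ p ∈ T with ε ≤ |x p|, x p ≤ #{p ∈ T | ε ≤ |x p|} * C := by
    simpa using sum_le_card_nsmul _ _ C fun p hp => hC p (mem_filter.mp hp).1
  have hsmall : ∑ p ∈ T with ¬ε ≤ |x p|, x p ≤ #{p ∈ T | ¬ε ≤ |x p|} * ε := by
    refine (sum_le_card_nsmul _ _ ε fun p hp => ?_).trans_eq (nsmul_eq_mul _ _)
    exact (le_abs_self _).trans (not_le.mp (mem_filter.mp hp).2).le
  have hcard : (#{p ∈ T | ¬ε ≤ |x p|} : ℝ) ≤ #T := mod_cast card_filter_le _ _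
  nlinarith

theorem one_div_sq_mul_sum_le_mul_card_filter_le_abs_div_add {ι : Type*} (T : Finset ι)
    (x : ι → ℝ) {N : ℕ} (hT : #T ≤ N ^ 2) {C ε : ℝ} (hC : ∀ p ∈ T, x p ≤ C) (hε : 0 ≤ ε) :
    (1 / (N : ℝ)) ^ 2 * ∑ p ∈ T, x p ≤ C * #{p ∈ T | ε ≤ |x p|} / N ^ 2 + ε := by
  have hT' : (#T : ℝ) ≤ N ^ 2 := mod_cast hT
  calc (1 / (N : ℝ)) ^ 2 * ∑ p ∈ T, x p
      ≤ (1 / (N : ℝ)) ^ 2 * (#{p ∈ T | ε ≤ |x p|} * C + N ^ 2 * ε) := by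
        gcongr
        exact (sum_le_card_filter_le_abs_mul_add_card_mul T x hC hε).trans (by gcongr)
    _ = C * #{p ∈ T | ε ≤ |x p|} / N ^ 2 + (N ^ 2 / N ^ 2 : ℝ) * ε := by ring
    _ ≤ _ := by gcongr; exact mul_le_of_le_one_left hε (div_self_le_one _)

section Integral

variable {α : Type*} [MeasurableSpace α] {μ : Measure α} {f g : α → ℝ} {a b : ℝ}

theorem ae_abs_mul_le_of_ae_abs_le (hf : ∀ᵐ x ∂μ, |f x| ≤ a) (hg : ∀ᵐ x ∂μ, |g x| ≤ b) :
    ∀ᵐ x ∂μ, |f x * g x| ≤ a * b := by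
  filter_upwards [hf, hg] with x hfx hgx
  rw [abs_mul]
  exact mul_le_mul hfx hgx (abs_nonneg _) ((abs_nonneg _).trans hfx)

theorem integrable_mul_of_ae_abs_le [IsFiniteMeasure μ] (hfm : AEStronglyMeasurable f μ)
    (hgm : AEStronglyMeasurable g μ) (hf : ∀ᵐ x ∂μ, |f x| ≤ a) (hg : ∀ᵐ x ∂μ, |g x| ≤ b) :
    Integrable (fun x => f x * g x) μ :=
  .of_bound (hfm.mul hgm) (a * b) (ae_abs_mul_le_of_ae_abs_le hf hg)

theorem abs_integral_mul_le_of_ae_abs_le [IsFiniteMeasure μ] (hf : ∀ᵐ x ∂μ, |f x| ≤ a)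
    (hg : ∀ᵐ x ∂μ, |g x| ≤ b) :
    |∫ x, f x * g x ∂μ| ≤ a * b * μ.real Set.univ := by
  simpa only [Real.norm_eq_abs] using norm_integral_le_of_norm_le_const (f := fun x => f x * g x)
    (by simpa only [Real.norm_eq_abs] using ae_abs_mul_le_of_ae_abs_le hf hg)

theorem integral_sq_sum_eq_sum_mul_integral {ι : Type*} (T : Finset ι) (w : ι → ℝ)
    (F : ι → α → ℝ) (hF : ∀ i j, Integrable (fun x => F i x * F j x) μ) :
    ∫ x, (∑ i ∈ T, w i * F i x) ^ 2 ∂μ =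
      ∑ p ∈ T ×ˢ T, w p.1 * w p.2 * ∫ x, F p.1 x * F p.2 x ∂μ := by
  have hexpand : ∀ x, (∑ i ∈ T, w i * F i x) ^ 2 =
      ∑ p ∈ T ×ˢ T, w p.1 * w p.2 * (F p.1 x * F p.2 x) := fun x => by
    rw [sq, sum_mul_sum, ← sum_product']
    exact sum_congr rfl fun p _ => by ring
  simp_rw [hexpand]
  rw [integral_finsetSum _ fun p _ => (hF p.1 p.2).const_mul _]
  exact sum_congr rfl fun p _ => integral_const_mul _ _

end Integral

theorem abs_mul_mul_le_sq_mul_of_le {s t u sbar c : ℝ} (hs : 0 ≤ s) (ht : 0 ≤ t) (hs' : s ≤ sbar)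
    (ht' : t ≤ sbar) (hu : |u| ≤ c) : |s * t * u| ≤ sbar ^ 2 * c := by
  rw [abs_mul, abs_mul, abs_of_nonneg hs, abs_of_nonneg ht, sq]
  exact mul_le_mul (mul_le_mul hs' ht' ht (hs.trans hs')) hu (abs_nonneg _) (mul_self_nonneg _)

theorem weighted_average_square_integral_estimate_general
    {D : ℕ} (Q : Set (EuclideanSpace ℝ (Fin D)))
    (hQbdd : Bornology.IsBounded Q)
    (V : ℕ → EuclideanSpace ℝ (Fin D) → ℝ) (Vlim : EuclideanSpace ℝ (Fin D) → ℝ)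
    (hVmeas : ∀ n, Measurable (V n)) (hVlimmeas : Measurable Vlim)
    (M : ℝ)
    (hVbound : ∀ n, ∀ᵐ x ∂(volume.restrict Q), |V n x| ≤ M)
    (hVlimbound : ∀ᵐ x ∂(volume.restrict Q), |Vlim x| ≤ M)
    (s : ℕ → ℕ → ℝ) (sbar : ℝ) (hreg : IsRegularSummation s sbar)
    (N : ℕ) (ε : ℝ) (hε : 0 < ε) :
    ∫ x in Q, ((1 / (N : ℝ)) * ∑ n ∈ Finset.Icc 1 N, s n N * (V n x - Vlim x)) ^ 2 ≤
      4 * sbar ^ 2 * (volume Q).toReal * M ^ 2 *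
        (({p : ℕ × ℕ | 1 ≤ p.1 ∧ p.1 ≤ N ∧ 1 ≤ p.2 ∧ p.2 ≤ N ∧
            ε ≤ s p.1 N * s p.2 N *
              |∫ x in Q, (V p.1 x - Vlim x) * (V p.2 x - Vlim x)|}).ncard : ℝ) / (N : ℝ) ^ 2
      + ε := by
  obtain ⟨hs0, hsbar, -, -⟩ := hreg
  have : IsFiniteMeasure (volume.restrict Q) :=
    isFiniteMeasure_restrict.mpr hQbdd.measure_lt_top.ne
  set f : ℕ → EuclideanSpace ℝ (Fin D) → ℝ := fun n x => V n x - Vlim x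
  set I : ℕ × ℕ → ℝ := fun p => ∫ x in Q, f p.1 x * f p.2 x
  set T := Icc 1 N ×ˢ Icc 1 N
  have hf : ∀ n, ∀ᵐ x ∂(volume.restrict Q), |f n x| ≤ 2 * M := fun n => by
    filter_upwards [hVbound n, hVlimbound] with x h1 h2
    linarith [abs_sub (V n x) (Vlim x)]
  have hfm : ∀ n, AEStronglyMeasurable (f n) (volume.restrict Q) := fun n =>
    ((hVmeas n).sub hVlimmeas).aestronglyMeasurable
  have hterm : ∀ p ∈ T, s p.1 N * s p.2 N * I p ≤ 4 * sbar ^ 2 * (volume Q).toReal * M ^ 2 := by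
    intro p _
    have hI : |I p| ≤ 2 * M * (2 * M) * (volume Q).toReal := by
      simpa [measureReal_def] using abs_integral_mul_le_of_ae_abs_le (hf p.1) (hf p.2)
    calc _ ≤ |s p.1 N * s p.2 N * I p| := le_abs_self _
      _ ≤ sbar ^ 2 * (2 * M * (2 * M) * (volume Q).toReal) :=
        abs_mul_mul_le_sq_mul_of_le (hs0 _ _) (hs0 _ _) (hsbar _ _) (hsbar _ _) hI
      _ = _ := by ring
  have hK : {p : ℕ × ℕ | 1 ≤ p.1 ∧ p.1 ≤ N ∧ 1 ≤ p.2 ∧ p.2 ≤ N ∧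
      ε ≤ s p.1 N * s p.2 N * |I p|} = ↑{p ∈ T | ε ≤ |s p.1 N * s p.2 N * I p|} := by
    ext p
    simp [T, abs_mul, abs_of_nonneg (hs0 _ _), and_assoc]
  simp_rw [mul_pow, integral_const_mul]
  rw [integral_sq_sum_eq_sum_mul_integral _ _ _ fun n m =>
    integrable_mul_of_ae_abs_le (hfm n) (hfm m) (hf n) (hf m)]
  change _ * ∑ p ∈ T, s p.1 N * s p.2 N * I p ≤ _ * ({p | _}.ncard : ℝ) / _ + ε
  rw [hK, Set.ncard_coe_finset]
  exact one_div_sq_mul_sum_le_mul_card_filter_le_abs_div_add T _ (by simp [T, sq]) hterm hε.le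

/-- The key estimate in the proof of Lemma 3.2 of the paper:
`∫_Q |(1/N) ∑_{n=1}^N s_{n,N} (V_n − V)|² dx ≤ 4 s̄² |Q| M² #K_N(ε)/N² + ε`,
where `K_N(ε)` is the set of pairs `(n,m)`, `n,m ≤ N`, with
`s_{n,N} s_{m,N} |∫_Q (V_n − V)(V_m − V) dx| ≥ ε`. -/
theorem weighted_average_square_integral_estimate
    {D : ℕ} (Q : Set (EuclideanSpace ℝ (Fin D)))
    (hQopen : IsOpen Q) (hQbdd : Bornology.IsBounded Q)
    (V : ℕ → EuclideanSpace ℝ (Fin D) → ℝ) (Vlim : EuclideanSpace ℝ (Fin D) → ℝ)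
    (hVmeas : ∀ n, Measurable (V n)) (hVlimmeas : Measurable Vlim)
    (M : ℝ)
    (hVbound : ∀ n, ∀ᵐ x ∂(volume.restrict Q), |V n x| ≤ M)
    (hVlimbound : ∀ᵐ x ∂(volume.restrict Q), |Vlim x| ≤ M)
    (s : ℕ → ℕ → ℝ) (sbar : ℝ) (hreg : IsRegularSummation s sbar)
    (N : ℕ) (ε : ℝ) (hε : 0 < ε) :
    ∫ x in Q, ((1 / (N : ℝ)) * ∑ n ∈ Finset.Icc 1 N, s n N * (V n x - Vlim x)) ^ 2 ≤
      4 * sbar ^ 2 * (volume Q).toReal * M ^ 2 *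
        (({p : ℕ × ℕ | 1 ≤ p.1 ∧ p.1 ≤ N ∧ 1 ≤ p.2 ∧ p.2 ≤ N ∧
            ε ≤ s p.1 N * s p.2 N *
              |∫ x in Q, (V p.1 x - Vlim x) * (V p.2 x - Vlim x)|}).ncard : ℝ) / (N : ℝ) ^ 2
      + ε :=
  weighted_average_square_integral_estimate_general Q hQbdd V Vlim hVmeas hVlimmeas M hVbound
    hVlimbound s sbar hreg N ε hε
end

section
/- Let H be a real Hilbert space and let {v_n} be a bounded sequence in H converging weakly to v ∈ H. Then there exists a subsequence {v_{n_j}} such that for every further subsequence {v_{n_{j_l}}}_{l≥1} of {v_{n_j}} and for every regular summation method {s_{l,N}}, the weighted averages (1/N) Σ_{l=1}^N s_{l,N} v_{n_{j_l}} converge in the norm of H to v as N → ∞. -/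
/-!
Subtracting the weak limit reduces to a weakly null bounded sequence `u`. Since `⟪u m, u n⟫ → 0`
as `n → ∞` for each fixed `m`, one can extract a subsequence that is almost orthogonal:
`|⟪u (φ i), u (φ j)⟫| ≤ 2⁻ⁱ 2⁻ʲ` for `i < j`, and this survives passing to further subsequences.
Expanding the square, `‖∑_{l ≤ N} s_{l,N} x_l‖²` is then at most `s̄² (N C² + 4)`: the diagonal
contributes `O(N)` and the off-diagonal terms a bounded amount, so the averages are `O(N^{-1/2})`.
-/

open Filter Finset
open scoped RealInnerProductSpace

theorem Nat.exists_strictMono_forall_lt_of_eventually {r : ℕ → ℕ → ℕ → Prop}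
    (h : ∀ j m, ∀ᶠ n in atTop, r j m n) :
    ∃ φ : ℕ → ℕ, StrictMono φ ∧ ∀ i j, i < j → r j (φ i) (φ j) := by
  have hnext : ∀ j m, ∃ n, m < n ∧ ∀ k ∈ Iic m, r j k n := fun j m =>
    ((eventually_gt_atTop m).and ((eventually_all_finset _).2 fun k _ => h j k)).exists
  -- `next j m` works against every position `≤ m`, in particular against all earlier terms.
  choose next hlt hr using hnext
  let φ : ℕ → ℕ := fun j => Nat.rec 0 (fun j φj => next (j + 1) φj) j
  have hφ : StrictMono φ := strictMono_nat_of_lt_succ fun j => hlt _ _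
  refine ⟨φ, hφ, fun i j hij => ?_⟩
  obtain ⟨j, rfl⟩ := Nat.exists_eq_add_one_of_ne_zero (Nat.ne_zero_of_lt hij)
  exact hr (j + 1) (φ j) (φ i) (mem_Iic.2 (hφ.monotone (Nat.lt_succ_iff.1 hij)))

theorem tendsto_one_div_smul_of_norm_sq_le {E : Type*} [SeminormedAddCommGroup E]
    [NormedSpace ℝ E] {f : ℕ → E} {A B : ℝ} (hf : ∀ N, ‖f N‖ ^ 2 ≤ A * N + B) :
    Tendsto (fun N : ℕ => (1 / (N : ℝ)) • f N) atTop (nhds 0) := by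
  rw [tendsto_zero_iff_norm_tendsto_zero]
  have hbound : ∀ N : ℕ, ‖(1 / (N : ℝ)) • f N‖ ^ 2 ≤ A / N + B / N / N := fun N => by
    rw [norm_smul, mul_pow, Real.norm_eq_abs, sq_abs]
    calc (1 / (N : ℝ)) ^ 2 * ‖f N‖ ^ 2 ≤ (1 / (N : ℝ)) ^ 2 * (A * N + B) := by gcongr; exact hf N
      _ = A / N + B / N / N := by
          rcases eq_or_ne (N : ℝ) 0 with hN | hN
          · simp [hN]
          · field_simp
  have hlim : Tendsto (fun N : ℕ => A / N + B / N / N) atTop (nhds 0) := by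
    simpa using (tendsto_const_div_atTop_nhds_zero_nat A).add
      ((tendsto_const_div_atTop_nhds_zero_nat B).div_atTop tendsto_natCast_atTop_atTop)
  simpa using (squeeze_zero (fun N => by positivity) hbound hlim).sqrt

section AlmostOrthogonal

variable {H : Type*} [NormedAddCommGroup H] [InnerProductSpace ℝ H]

def AlmostOrthogonal (x : ℕ → H) (δ : ℕ → ℝ) : Prop :=
  ∀ i j, i < j → |⟪x i, x j⟫| ≤ δ i * δ j

theorem exists_strictMono_almostOrthogonal {u : ℕ → H}
    (hu : ∀ w : H, Tendsto (fun n => ⟪u n, w⟫) atTop (nhds 0)) {δ : ℕ → ℝ}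
    (hδ : Antitone δ) (hδ_pos : ∀ n, 0 < δ n) :
    ∃ φ : ℕ → ℕ, StrictMono φ ∧ AlmostOrthogonal (u ∘ φ) δ := by
  have hsmall : ∀ j m, ∀ᶠ n in atTop, |⟪u m, u n⟫| ≤ δ j ^ 2 := fun j m => by
    have hlim : Tendsto (fun n => |⟪u m, u n⟫|) atTop (nhds 0) := by
      simpa [real_inner_comm] using (hu (u m)).abs
    exact hlim.eventually (ge_mem_nhds (pow_pos (hδ_pos j) 2))
  obtain ⟨φ, hφ, hr⟩ := Nat.exists_strictMono_forall_lt_of_eventually hsmall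
  refine ⟨φ, hφ, fun i j hij => (hr i j hij).trans ?_⟩
  rw [sq]
  exact mul_le_mul_of_nonneg_right (hδ hij.le) (hδ_pos j).le

theorem AlmostOrthogonal.comp_strictMono {x : ℕ → H} {δ : ℕ → ℝ} (hx : AlmostOrthogonal x δ)
    (hδ : Antitone δ) (hδ_nonneg : ∀ n, 0 ≤ δ n) {ψ : ℕ → ℕ} (hψ : StrictMono ψ) :
    AlmostOrthogonal (x ∘ ψ) δ := fun _ _ hij =>
  (hx _ _ (hψ hij)).trans
    (mul_le_mul (hδ hψ.le_apply) (hδ hψ.le_apply) (hδ_nonneg _) (hδ_nonneg _))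

theorem AlmostOrthogonal.abs_inner_le {x : ℕ → H} {δ : ℕ → ℝ} (hx : AlmostOrthogonal x δ)
    {C : ℝ} (hC : ∀ l, ‖x l‖ ≤ C) (l m : ℕ) :
    |⟪x l, x m⟫| ≤ (if l = m then C ^ 2 else 0) + δ l * δ m := by
  rcases lt_trichotomy l m with hlm | rfl | hlm
  · simpa [hlm.ne] using hx l m hlm
  · rw [if_pos rfl, real_inner_self_eq_norm_sq, abs_of_nonneg (by positivity)]
    have hsq : ‖x l‖ ^ 2 ≤ C ^ 2 := pow_le_pow_left₀ (norm_nonneg _) (hC l) 2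
    nlinarith [mul_self_nonneg (δ l)]
  · simpa [hlm.ne', real_inner_comm, mul_comm] using hx m l hlm

theorem AlmostOrthogonal.norm_sum_smul_sq_le {x : ℕ → H} {δ : ℕ → ℝ}
    (hx : AlmostOrthogonal x δ) {C : ℝ} (hC : ∀ l, ‖x l‖ ≤ C) {a : ℕ → ℝ} {b : ℝ}
    (ha : ∀ l, |a l| ≤ b) (S : Finset ℕ) :
    ‖∑ l ∈ S, a l • x l‖ ^ 2 ≤ b ^ 2 * (#S * C ^ 2 + (∑ l ∈ S, δ l) ^ 2) := by
  have hexpand : ‖∑ l ∈ S, a l • x l‖ ^ 2 = ∑ l ∈ S, ∑ m ∈ S, a l * a m * ⟪x l, x m⟫ := by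
    simp only [← real_inner_self_eq_norm_sq, sum_inner, inner_sum, real_inner_smul_left,
      real_inner_smul_right, mul_assoc]
    rw [sum_comm]
    simp only [mul_left_comm]
  have hterm : ∀ l m, a l * a m * ⟪x l, x m⟫ ≤
      b ^ 2 * ((if l = m then C ^ 2 else 0) + δ l * δ m) := fun l m => by
    have hb : 0 ≤ b := (abs_nonneg _).trans (ha 0)
    calc a l * a m * ⟪x l, x m⟫ ≤ |a l| * |a m| * |⟪x l, x m⟫| := by
          rw [← abs_mul, ← abs_mul]; exact le_abs_self _
      _ ≤ b ^ 2 * ((if l = m then C ^ 2 else 0) + δ l * δ m) := by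
          rw [sq]
          exact mul_le_mul (mul_le_mul (ha l) (ha m) (abs_nonneg _) hb)
            (hx.abs_inner_le hC l m) (abs_nonneg _) (by positivity)
  rw [hexpand]
  refine (sum_le_sum fun l _ => sum_le_sum fun m _ => hterm l m).trans_eq ?_
  simp [← mul_sum, sum_add_distrib, sum_mul_sum, sq, mul_comm]

theorem AlmostOrthogonal.tendsto_average {x : ℕ → H} {δ : ℕ → ℝ} (hx : AlmostOrthogonal x δ)
    (hδ : Summable δ) (hδ_nonneg : ∀ n, 0 ≤ δ n) {C : ℝ} (hC : ∀ l, ‖x l‖ ≤ C)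
    {s : ℕ → ℕ → ℝ} {b : ℝ} (hs : ∀ l N, |s l N| ≤ b) :
    Tendsto (fun N : ℕ => (1 / (N : ℝ)) • ∑ l ∈ Icc 1 N, s l N • x l) atTop (nhds 0) := by
  refine tendsto_one_div_smul_of_norm_sq_le (A := b ^ 2 * C ^ 2) (B := b ^ 2 * (∑' l, δ l) ^ 2)
    fun N => (hx.norm_sum_smul_sq_le hC (hs · N) (Icc 1 N)).trans ?_
  have hpartial : ∑ l ∈ Icc 1 N, δ l ≤ ∑' l, δ l :=
    hδ.sum_le_tsum _ fun l _ => hδ_nonneg l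
  have hpartial_nonneg : 0 ≤ ∑ l ∈ Icc 1 N, δ l := sum_nonneg fun l _ => hδ_nonneg l
  have := mul_le_mul_of_nonneg_left (pow_le_pow_left₀ hpartial_nonneg hpartial 2) (sq_nonneg b)
  rw [Nat.card_Icc, add_tsub_cancel_right]
  linarith

end AlmostOrthogonal

theorem IsRegularSummation.average_add_const {s : ℕ → ℕ → ℝ} {sbar : ℝ}
    (hs : IsRegularSummation s sbar) {E : Type*} [AddCommGroup E] [Module ℝ E]
    (y : ℕ → E) (c : E) {N : ℕ} (hN : N ≠ 0) :
    (1 / (N : ℝ)) • ∑ l ∈ Icc 1 N, s l N • (y l + c) =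
      (1 / (N : ℝ)) • ∑ l ∈ Icc 1 N, s l N • y l + c := by
  rw [sum_congr rfl fun l _ => smul_add (s l N) (y l) c, sum_add_distrib, ← sum_smul, hs.2.2.2,
    smul_add, smul_smul, one_div_mul_cancel (Nat.cast_ne_zero.2 hN), one_smul]

theorem banachSaks_rosenthal_general
    {H : Type*} [NormedAddCommGroup H] [InnerProductSpace ℝ H]
    (v : ℕ → H) (hbdd : ∃ C : ℝ, ∀ n, ‖v n‖ ≤ C) (vlim : H)
    (hweak : ∀ w : H, Filter.Tendsto (fun n : ℕ => ⟪v n, w⟫) Filter.atTop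
      (nhds ⟪vlim, w⟫)) :
    ∃ φ : ℕ → ℕ, StrictMono φ ∧
      ∀ ψ : ℕ → ℕ, StrictMono ψ →
        ∀ (s : ℕ → ℕ → ℝ) (sbar : ℝ), IsRegularSummation s sbar →
          Filter.Tendsto
            (fun N : ℕ => (1 / (N : ℝ)) • ∑ l ∈ Finset.Icc 1 N, s l N • v (φ (ψ l)))
            Filter.atTop (nhds vlim) := by
  obtain ⟨C, hC⟩ := hbdd
  set u : ℕ → H := fun n => v n - vlim
  have hu_null : ∀ w, Tendsto (fun n => ⟪u n, w⟫) atTop (nhds 0) := fun w => by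
    simpa [u, inner_sub_left] using (hweak w).sub_const ⟪vlim, w⟫
  have hu_bdd : ∀ n, ‖u n‖ ≤ C + ‖vlim‖ := fun n => (norm_sub_le _ _).trans (by gcongr; exact hC n)
  have hδ : Antitone fun n : ℕ => (1 / 2 : ℝ) ^ n := pow_right_anti₀ (by norm_num) (by norm_num)
  obtain ⟨φ, hφ, hortho⟩ :=
    exists_strictMono_almostOrthogonal hu_null hδ fun n => by positivity
  refine ⟨φ, hφ, fun ψ hψ s sbar hs => ?_⟩
  have hs_abs : ∀ l N, |s l N| ≤ sbar := fun l N => (abs_of_nonneg (hs.1 l N)).trans_le (hs.2.1 l N)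
  have havg := (hortho.comp_strictMono hδ (fun n => by positivity) hψ).tendsto_average
    summable_geometric_two (fun n => by positivity) (fun l => hu_bdd _) hs_abs
  have hv : ∀ n, v n = u n + vlim := fun n => (sub_add_cancel _ _).symm
  refine (zero_add vlim ▸ havg.add_const vlim).congr' <| (eventually_ne_atTop 0).mono fun N hN => ?_
  simp only [hv, Function.comp_apply]
  rw [hs.average_add_const _ vlim hN]

/-- Banach–Saks property combined with Rosenthal's alternative: a bounded weakly
convergent sequence in a real Hilbert space has a subsequence all of whose further
subsequences have norm-convergent weighted averages (for every regular summation
method), with limit the weak limit `v`. -/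
theorem banachSaks_rosenthal
    {H : Type*} [NormedAddCommGroup H] [InnerProductSpace ℝ H] [CompleteSpace H]
    (v : ℕ → H) (hbdd : ∃ C : ℝ, ∀ n, ‖v n‖ ≤ C) (vlim : H)
    (hweak : ∀ w : H, Filter.Tendsto (fun n : ℕ => ⟪v n, w⟫) Filter.atTop
      (nhds ⟪vlim, w⟫)) :
    ∃ φ : ℕ → ℕ, StrictMono φ ∧
      ∀ ψ : ℕ → ℕ, StrictMono ψ →
        ∀ (s : ℕ → ℕ → ℝ) (sbar : ℝ), IsRegularSummation s sbar →
          Filter.Tendsto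
            (fun N : ℕ => (1 / (N : ℝ)) • ∑ l ∈ Finset.Icc 1 N, s l N • v (φ (ψ l)))
            Filter.atTop (nhds vlim) :=
  banachSaks_rosenthal_general v hbdd vlim hweak
end

section
/- Let (X, μ) be a finite measure space, γ > 1, and let f_n : X → ℝ be nonnegative measurable functions with sup_n ‖f_n‖_{L^γ(X,μ)} < ∞. Suppose μ({x : f_n(x) ≥ ρ̄}) → 0 as n → ∞ for some constant ρ̄ > 0, and that f_n → f weakly in L^γ(X,μ) (i.e., ∫_X f_n g dμ → ∫_X f g dμ for every g ∈ L^{γ'}(X,μ), 1/γ + 1/γ' = 1). Then f ≤ ρ̄ almost everywhere on X. -/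
/-!
Split `f_n ≤ ρ + 1_{f_n ≥ ρ} f_n`. By Hölder, `∫_{f_n ≥ ρ} |f_n| ≤ ‖f_n‖_γ μ(f_n ≥ ρ)^{1 - 1/γ} → 0`,
so testing the weak convergence against indicators gives `∫_s f ≤ ρ μ(s)` for every measurable `s`,
whence `f ≤ ρ` a.e.
-/

open MeasureTheory Filter
open scoped ENNReal Topology

namespace MeasureTheory

variable {X : Type*} [MeasurableSpace X] {μ : Measure X}

theorem eLpNorm_one_restrict_le {f : X → ℝ} {p : ℝ≥0∞} (hp : 1 ≤ p)
    (hf : AEStronglyMeasurable f μ) (s : Set X) :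
    eLpNorm f 1 (μ.restrict s) ≤ eLpNorm f p μ * μ s ^ (1 - 1 / p.toReal) :=
  calc eLpNorm f 1 (μ.restrict s)
      ≤ eLpNorm f p (μ.restrict s) *
          μ.restrict s Set.univ ^ (1 / (1 : ℝ≥0∞).toReal - 1 / p.toReal) :=
        eLpNorm_le_eLpNorm_mul_rpow_measure_univ hp hf.restrict
    _ ≤ eLpNorm f p μ * μ s ^ (1 - 1 / p.toReal) := by
        rw [Measure.restrict_apply_univ, ENNReal.toReal_one, div_one]
        exact mul_le_mul_left (eLpNorm_restrict_le f p μ s) _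

theorem tendsto_setIntegral_norm_zero_of_eLpNorm_le {f : ℕ → X → ℝ} {s : ℕ → Set X}
    {p C : ℝ≥0∞} (hp : 1 < p) (hC : C ≠ ∞) (hf : ∀ n, AEStronglyMeasurable (f n) μ)
    (hfC : ∀ n, eLpNorm (f n) p μ ≤ C) (hs : Tendsto (fun n => μ (s n)) atTop (𝓝 0)) :
    Tendsto (fun n => ∫ x in s n, ‖f n x‖ ∂μ) atTop (𝓝 0) := by
  simp_rw [integral_norm_eq_lintegral_enorm (hf _).restrict, ← eLpNorm_one_eq_lintegral_enorm]
  refine (ENNReal.tendsto_toReal ENNReal.zero_ne_top).comp ?_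
  have hexp : 0 < 1 - 1 / p.toReal := by
    rcases eq_or_ne p ∞ with rfl | hp_top
    · simp
    · have hp_real : 1 < p.toReal := by
        simpa using (ENNReal.toReal_lt_toReal ENNReal.one_ne_top hp_top).2 hp
      rwa [sub_pos, div_lt_one (by linarith)]
  have hbound : Tendsto (fun n => C * μ (s n) ^ (1 - 1 / p.toReal)) atTop (𝓝 0) := by
    have := ENNReal.Tendsto.const_mul
      ((ENNReal.continuous_rpow_const (y := 1 - 1 / p.toReal)).tendsto 0 |>.comp hs) (Or.inr hC)
    rwa [ENNReal.zero_rpow_of_pos hexp, mul_zero] at this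
  exact tendsto_of_tendsto_of_tendsto_of_le_of_le tendsto_const_nhds hbound (fun _ => bot_le)
    fun n => (eLpNorm_one_restrict_le hp.le (hf n) (s n)).trans (by gcongr; exact hfC n)

theorem setIntegral_le_mul_measureReal_add_setIntegral_norm {f : X → ℝ} {ρ : ℝ} {s : Set X}
    (hρ : 0 ≤ ρ) (hf : Integrable f μ) (hE : MeasurableSet {x | ρ ≤ f x}) (hs : μ s ≠ ∞) :
    ∫ x in s, f x ∂μ ≤ ρ * μ.real s + ∫ x in {x | ρ ≤ f x}, ‖f x‖ ∂μ := by
  set E := {x | ρ ≤ f x}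
  have hfE : Integrable (E.indicator f) μ := hf.indicator hE
  have hρs : IntegrableOn (fun _ => ρ) s μ := integrableOn_const hs
  have htrunc : f ≤ fun x => ρ + E.indicator f x := fun x => by
    by_cases hx : x ∈ E
    · simpa [Set.indicator_of_mem hx] using hρ
    · simpa [Set.indicator_of_notMem hx] using (not_le.mp hx).le
  have hfE_nonneg : 0 ≤ E.indicator f := Set.indicator_nonneg fun x hx => hρ.trans hx
  calc ∫ x in s, f x ∂μ
      ≤ ∫ x in s, (ρ + E.indicator f x) ∂μ :=
        setIntegral_mono hf.integrableOn (hρs.add hfE.integrableOn) htrunc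
    _ = ρ * μ.real s + ∫ x in s, E.indicator f x ∂μ := by
        rw [integral_add hρs hfE.integrableOn, setIntegral_const, smul_eq_mul, mul_comm]
    _ ≤ ρ * μ.real s + ∫ x, E.indicator f x ∂μ :=
        add_le_add le_rfl (setIntegral_le_integral hfE (.of_forall hfE_nonneg))
    _ ≤ ρ * μ.real s + ∫ x in E, ‖f x‖ ∂μ := by
        rw [integral_indicator hE]
        exact add_le_add le_rfl <|
          integral_mono hf.integrableOn hf.integrableOn.norm fun x => Real.le_norm_self (f x)

end MeasureTheory

theorem weak_limit_le_of_superlevel_tendsto_zero_general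
    {X : Type*} [MeasurableSpace X] (μ : Measure X) [IsFiniteMeasure μ]
    (γ : ℝ) (hγ : 1 < γ)
    (f : ℕ → X → ℝ) (flim : X → ℝ)
    (hmeas : ∀ n, Measurable (f n))
    (hbdd : ∃ C : ℝ≥0∞, C < ⊤ ∧ ∀ n, eLpNorm (f n) (ENNReal.ofReal γ) μ ≤ C)
    (hflim : MemLp flim (ENNReal.ofReal γ) μ)
    (ρ : ℝ) (hρ : 0 < ρ)
    (hsmall : Filter.Tendsto (fun n : ℕ => μ {x | ρ ≤ f n x}) Filter.atTop (nhds 0))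
    (hweak : ∀ g : X → ℝ, MemLp g (ENNReal.ofReal (γ / (γ - 1))) μ →
      Filter.Tendsto (fun n : ℕ => ∫ x, f n x * g x ∂μ) Filter.atTop
        (nhds (∫ x, flim x * g x ∂μ))) :
    ∀ᵐ x ∂μ, flim x ≤ ρ := by
  obtain ⟨C, hC, hfC⟩ := hbdd
  have hp : 1 < ENNReal.ofReal γ := by
    simpa using ENNReal.ofReal_lt_ofReal_iff'.2 ⟨hγ, by linarith⟩
  have hfi n : Integrable (f n) μ :=
    MemLp.integrable hp.le ⟨(hmeas n).aestronglyMeasurable, (hfC n).trans_lt hC⟩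
  have htail := tendsto_setIntegral_norm_zero_of_eLpNorm_le hp hC.ne
    (fun n => (hmeas n).aestronglyMeasurable) hfC hsmall
  refine ae_le_of_forall_setIntegral_le (hflim.integrable hp.le) (integrable_const ρ)
    fun s hs _ => ?_
  have hweak_s : Tendsto (fun n => ∫ x in s, f n x ∂μ) atTop (𝓝 (∫ x in s, flim x ∂μ)) := by
    simpa [← Set.indicator_mul_right, integral_indicator hs] using
      hweak (s.indicator 1) (memLp_indicator_const _ hs 1 (Or.inr (measure_ne_top μ s)))
  rw [setIntegral_const, smul_eq_mul, mul_comm]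
  refine le_of_tendsto_of_tendsto' hweak_s (by simpa using tendsto_const_nhds.add htail)
    fun n => setIntegral_le_mul_measureReal_add_setIntegral_norm hρ.le (hfi n)
      (measurableSet_le measurable_const (hmeas n)) (measure_ne_top μ s)

/-- The truncation argument: if nonnegative `f_n` are bounded in `L^γ(μ)`, `μ` finite,
`μ({f_n ≥ ρ̄}) → 0`, and `f_n → f` weakly in `L^γ`, then `f ≤ ρ̄` a.e. -/
theorem weak_limit_le_of_superlevel_tendsto_zero
    {X : Type*} [MeasurableSpace X] (μ : Measure X) [IsFiniteMeasure μ]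
    (γ : ℝ) (hγ : 1 < γ)
    (f : ℕ → X → ℝ) (flim : X → ℝ)
    (hmeas : ∀ n, Measurable (f n))
    (hnonneg : ∀ n x, 0 ≤ f n x)
    (hbdd : ∃ C : ℝ≥0∞, C < ⊤ ∧ ∀ n, eLpNorm (f n) (ENNReal.ofReal γ) μ ≤ C)
    (hflim : MemLp flim (ENNReal.ofReal γ) μ)
    (ρ : ℝ) (hρ : 0 < ρ)
    (hsmall : Filter.Tendsto (fun n : ℕ => μ {x | ρ ≤ f n x}) Filter.atTop (nhds 0))
    (hweak : ∀ g : X → ℝ, MemLp g (ENNReal.ofReal (γ / (γ - 1))) μ →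
      Filter.Tendsto (fun n : ℕ => ∫ x, f n x * g x ∂μ) Filter.atTop
        (nhds (∫ x, flim x * g x ∂μ))) :
    ∀ᵐ x ∂μ, flim x ≤ ρ :=
  weak_limit_le_of_superlevel_tendsto_zero_general μ γ hγ f flim hmeas hbdd hflim ρ hρ hsmall hweak
end

section
/- Let Q ⊂ ℝ^D be a bounded domain, {s_{n,N}} a regular summation method, and w_n ∈ L^∞(Q) a sequence with sup_n ‖w_n‖_{L^∞(Q)} < ∞, and let w ∈ L^∞(Q). Suppose that (1/N) Σ_{n=1}^N s_{n,N} w_n → w weakly-* in L^∞(Q) and (1/N) Σ_{n=1}^N s_{n,N} w_n² → w² weakly-* in L^∞(Q) as N → ∞. Then (1/N) Σ_{n=1}^N s_{n,N} ∫_Q |w_n − w|² dx → 0 as N → ∞. -/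
/-! Expanding the square, `c ∑ aᵢ ∫ (fᵢ - g)² = ∫ (c ∑ aᵢ fᵢ²) - 2 ∫ (c ∑ aᵢ fᵢ) g + (c ∑ aᵢ) ∫ g²`.
Testing the two weak-* limits against `1` and against `g` itself, and using `c ∑ aᵢ → 1`,
the right-hand side tends to `∫ g² - 2 ∫ g² + ∫ g² = 0`. -/

open MeasureTheory Filter Finset
open scoped ENNReal

section WeightedAverages

variable {α ι κ : Type*} [MeasurableSpace α] {μ : Measure α}

theorem integral_sub_sq_eq {f g : α → ℝ} (hf : MemLp f 2 μ) (hg : MemLp g 2 μ) :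
    ∫ x, (f x - g x) ^ 2 ∂μ = ∫ x, f x ^ 2 ∂μ - 2 * ∫ x, f x * g x ∂μ + ∫ x, g x ^ 2 ∂μ := by
  have hfg : Integrable (fun x => 2 * (f x * g x)) μ := (hf.integrable_mul hg).const_mul 2
  have hfg' : Integrable (fun x => f x ^ 2 - 2 * (f x * g x)) μ := hf.integrable_sq.sub hfg
  have hexpand : (fun x => (f x - g x) ^ 2) = fun x => f x ^ 2 - 2 * (f x * g x) + g x ^ 2 := by
    ext x; ring
  rw [hexpand, integral_add hfg' hg.integrable_sq, integral_sub hf.integrable_sq hfg,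
    integral_const_mul]

theorem integral_const_mul_sum {S : Finset ι} {c : ℝ} {a : ι → ℝ} {f : ι → α → ℝ}
    (hf : ∀ i ∈ S, Integrable (f i) μ) :
    ∫ x, c * ∑ i ∈ S, a i * f i x ∂μ = c * ∑ i ∈ S, a i * ∫ x, f i x ∂μ := by
  rw [integral_const_mul, integral_finsetSum _ fun i hi => (hf i hi).const_mul (a i)]
  simp_rw [integral_const_mul]

theorem integral_const_mul_sum_mul {S : Finset ι} {c : ℝ} {a : ι → ℝ} {f : ι → α → ℝ}
    {g : α → ℝ} (hfg : ∀ i ∈ S, Integrable (fun x => f i x * g x) μ) :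
    ∫ x, (c * ∑ i ∈ S, a i * f i x) * g x ∂μ = c * ∑ i ∈ S, a i * ∫ x, f i x * g x ∂μ := by
  simp_rw [mul_assoc, Finset.sum_mul, mul_assoc]
  exact integral_const_mul_sum hfg

theorem mul_sum_integral_sub_sq_eq {S : Finset ι} {c : ℝ} {a : ι → ℝ} {f : ι → α → ℝ}
    {g : α → ℝ} (hf : ∀ i, MemLp (f i) 2 μ) (hg : MemLp g 2 μ) :
    c * ∑ i ∈ S, a i * ∫ x, (f i x - g x) ^ 2 ∂μ =
      ∫ x, c * ∑ i ∈ S, a i * f i x ^ 2 ∂μ - 2 * ∫ x, (c * ∑ i ∈ S, a i * f i x) * g x ∂μ +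
        (c * ∑ i ∈ S, a i) * ∫ x, g x ^ 2 ∂μ := by
  rw [integral_const_mul_sum fun i _ => (hf i).integrable_sq,
    integral_const_mul_sum_mul fun i _ => (hf i).integrable_mul hg]
  simp_rw [integral_sub_sq_eq (hf _) hg]
  simp only [Finset.mul_sum, Finset.sum_mul, ← Finset.sum_sub_distrib, ← Finset.sum_add_distrib]
  exact Finset.sum_congr rfl fun i _ => by ring

theorem tendsto_mul_sum_integral_sub_sq {l : Filter κ} {S : κ → Finset ι} {c : κ → ℝ}
    {a : κ → ι → ℝ} {f : ι → α → ℝ} {g : α → ℝ} (hf : ∀ i, MemLp (f i) 2 μ) (hg : MemLp g 2 μ)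
    (ha : Tendsto (fun k => c k * ∑ i ∈ S k, a k i) l (nhds 1))
    (hlin : Tendsto (fun k => ∫ x, (c k * ∑ i ∈ S k, a k i * f i x) * g x ∂μ) l
      (nhds (∫ x, g x * g x ∂μ)))
    (hsq : Tendsto (fun k => ∫ x, c k * ∑ i ∈ S k, a k i * f i x ^ 2 ∂μ) l
      (nhds (∫ x, g x ^ 2 ∂μ))) :
    Tendsto (fun k => c k * ∑ i ∈ S k, a k i * ∫ x, (f i x - g x) ^ 2 ∂μ) l (nhds 0) := by
  have hlim := (hsq.sub (hlin.const_mul 2)).add (ha.mul_const (∫ x, g x ^ 2 ∂μ))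
  have hzero : ∫ x, g x ^ 2 ∂μ - 2 * ∫ x, g x * g x ∂μ + 1 * ∫ x, g x ^ 2 ∂μ = 0 := by
    simp_rw [← sq]; ring
  rw [hzero] at hlim
  exact hlim.congr fun k => mul_sum_integral_sub_sq_eq hf hg |>.symm

end WeightedAverages

theorem weighted_averages_L2_distance_tendsto_zero_general
    {D : ℕ} (Q : Set (EuclideanSpace ℝ (Fin D)))
    (hQbdd : Bornology.IsBounded Q)
    (s : ℕ → ℕ → ℝ) (sbar : ℝ) (hreg : IsRegularSummation s sbar)
    (w : ℕ → EuclideanSpace ℝ (Fin D) → ℝ)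
    (hwmeas : ∀ n, Measurable (w n))
    (C : ℝ) (hC : ∀ n, ∀ᵐ x ∂(volume.restrict Q), |w n x| ≤ C)
    (wlim : EuclideanSpace ℝ (Fin D) → ℝ)
    (hwlim : MemLp wlim ⊤ (volume.restrict Q))
    (havg1 : ∀ g : EuclideanSpace ℝ (Fin D) → ℝ, Integrable g (volume.restrict Q) →
      Filter.Tendsto (fun N : ℕ =>
          ∫ x in Q, ((1 / (N : ℝ)) * ∑ n ∈ Finset.Icc 1 N, s n N * w n x) * g x)
        Filter.atTop (nhds (∫ x in Q, wlim x * g x)))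
    (havg2 : ∀ g : EuclideanSpace ℝ (Fin D) → ℝ, Integrable g (volume.restrict Q) →
      Filter.Tendsto (fun N : ℕ =>
          ∫ x in Q, ((1 / (N : ℝ)) * ∑ n ∈ Finset.Icc 1 N, s n N * (w n x) ^ 2) * g x)
        Filter.atTop (nhds (∫ x in Q, (wlim x) ^ 2 * g x))) :
    Filter.Tendsto (fun N : ℕ =>
        (1 / (N : ℝ)) * ∑ n ∈ Finset.Icc 1 N, s n N * ∫ x in Q, (w n x - wlim x) ^ 2)
      Filter.atTop (nhds 0) := by
  have : IsFiniteMeasure (volume.restrict Q) :=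
    ⟨by rw [Measure.restrict_apply_univ]; exact hQbdd.measure_lt_top⟩
  have hw : ∀ n, MemLp (w n) 2 (volume.restrict Q) := fun n =>
    (memLp_top_of_bound (hwmeas n).aestronglyMeasurable C <| by
      simpa only [Real.norm_eq_abs] using hC n).mono_exponent le_top
  have hnorm : Tendsto (fun N : ℕ => 1 / (N : ℝ) * ∑ n ∈ Finset.Icc 1 N, s n N) atTop (nhds 1) :=
    tendsto_const_nhds.congr' <| (eventually_ne_atTop 0).mono fun N hN => by
      dsimp only
      rw [hreg.2.2.2 N, one_div_mul_cancel (Nat.cast_ne_zero.mpr hN)]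
  refine tendsto_mul_sum_integral_sub_sq hw (hwlim.mono_exponent le_top) hnorm
    (havg1 wlim (hwlim.integrable le_top)) ?_
  simpa only [mul_one] using havg2 (fun _ => 1) (integrable_const 1)

/-- The step of Lemma 3.8 of the paper: if the weighted averages of `w_n` and of `w_n²`
converge weakly-* in `L^∞(Q)` to `w` and `w²`, then
`(1/N) ∑_{n=1}^N s_{n,N} ∫_Q |w_n − w|² dx → 0`. -/
theorem weighted_averages_L2_distance_tendsto_zero
    {D : ℕ} (Q : Set (EuclideanSpace ℝ (Fin D)))
    (hQopen : IsOpen Q) (hQbdd : Bornology.IsBounded Q)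
    (s : ℕ → ℕ → ℝ) (sbar : ℝ) (hreg : IsRegularSummation s sbar)
    (w : ℕ → EuclideanSpace ℝ (Fin D) → ℝ)
    (hwmeas : ∀ n, Measurable (w n))
    (C : ℝ) (hC : ∀ n, ∀ᵐ x ∂(volume.restrict Q), |w n x| ≤ C)
    (wlim : EuclideanSpace ℝ (Fin D) → ℝ)
    (hwlim : MemLp wlim ⊤ (volume.restrict Q))
    (havg1 : ∀ g : EuclideanSpace ℝ (Fin D) → ℝ, Integrable g (volume.restrict Q) →
      Filter.Tendsto (fun N : ℕ =>
          ∫ x in Q, ((1 / (N : ℝ)) * ∑ n ∈ Finset.Icc 1 N, s n N * w n x) * g x)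
        Filter.atTop (nhds (∫ x in Q, wlim x * g x)))
    (havg2 : ∀ g : EuclideanSpace ℝ (Fin D) → ℝ, Integrable g (volume.restrict Q) →
      Filter.Tendsto (fun N : ℕ =>
          ∫ x in Q, ((1 / (N : ℝ)) * ∑ n ∈ Finset.Icc 1 N, s n N * (w n x) ^ 2) * g x)
        Filter.atTop (nhds (∫ x in Q, (wlim x) ^ 2 * g x))) :
    Filter.Tendsto (fun N : ℕ =>
        (1 / (N : ℝ)) * ∑ n ∈ Finset.Icc 1 N, s n N * ∫ x in Q, (w n x - wlim x) ^ 2)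
      Filter.atTop (nhds 0) :=
  weighted_averages_L2_distance_tendsto_zero_general Q hQbdd s sbar hreg w hwmeas C hC wlim hwlim
    havg1 havg2
end

section
/- Let Q ⊂ ℝ^D be a bounded domain and let U_n : Q → ℝ^D be measurable functions such that the family {|U_n|}_{n≥1} is equi-integrable (uniformly integrable) in L^1(Q), and let U ∈ L^1(Q; ℝ^D). Suppose that for every continuous compactly supported function b : ℝ^D → ℝ one has b(U_n) → b(U) in L^2(Q) as n → ∞. Then U_n → U strongly in L^1(Q; ℝ^D). -/
/-!
Uniform integrability plus convergence in measure gives `L¹` convergence on a set of finite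
measure (Vitali), so it suffices to show `U n → U` in measure. `L²` convergence of `b ∘ U n`
gives convergence in measure of `b ∘ U n` for every `b ∈ C_c`. Choose `R` so that
`{‖U‖ ≥ R}` is small. Outside it, a bump `χ` equal to `1` on the ball of radius `R` detects
the points where `U n` leaves the ball of radius `R + 1`. Elsewhere, the truncation
`v ↦ ψ v • v`, where `ψ = 1` on the ball of radius `R + 1`, sees the full difference
`U n - U`. Its coordinates are again test functions in `C_c`.
-/

open MeasureTheory Filter Topology
open scoped ENNReal

lemma EuclideanSpace.norm_le_sum_norm_apply {κ : Type*} [Fintype κ]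
    (v : EuclideanSpace ℝ κ) : ‖v‖ ≤ ∑ k, ‖v k‖ := by
  conv_lhs => rw [← (EuclideanSpace.basisFun κ ℝ).sum_repr v]
  refine (norm_sum_le _ _).trans_eq ?_
  simp [norm_smul]

namespace MeasureTheory

variable {α : Type*} [MeasurableSpace α] {μ : Measure α}

lemma tendsto_measure_le_norm_atTop [IsFiniteMeasure μ] {E : Type*} [NormedAddCommGroup E]
    {g : α → E} (hg : AEStronglyMeasurable g μ) :
    Tendsto (fun R : ℝ => μ {x | R ≤ ‖g x‖}) atTop (𝓝 0) := by
  have hempty : ⋂ R : ℝ, {x | R ≤ ‖g x‖} = ∅ :=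
    Set.iInter_eq_empty_iff.2 fun x => ⟨‖g x‖ + 1, by simp⟩
  simpa [Function.comp_def, hempty] using
    tendsto_measure_iInter_atTop (μ := μ) (s := fun R : ℝ => {x | R ≤ ‖g x‖})
    (fun R => nullMeasurableSet_le aemeasurable_const hg.norm.aemeasurable)
    (fun R R' hRR' x hx => le_trans hRR' hx) ⟨0, measure_ne_top μ _⟩

variable {ι κ : Type*} {l : Filter ι}

lemma tendstoInMeasure_of_forall_apply [Fintype κ] {f : ι → α → EuclideanSpace ℝ κ}
    {g : α → EuclideanSpace ℝ κ}
    (h : ∀ k, TendstoInMeasure μ (fun n x => f n x k) l (fun x => g x k)) :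
    TendstoInMeasure μ f l g := by
  simp only [tendstoInMeasure_iff_norm] at h ⊢
  intro ε hε
  -- dividing by `card κ + 1` rather than `card κ` keeps `η` positive when `κ` is empty
  set η := ε / (Fintype.card κ + 1)
  have hη : 0 < η := by positivity
  have hsub : ∀ n, {x | ε ≤ ‖f n x - g x‖} ⊆ ⋃ k, {x | η ≤ ‖f n x k - g x k‖} := by
    intro n x hx
    by_contra hcon
    simp only [Set.mem_iUnion, Set.mem_ofPred_eq, not_exists, not_le] at hcon hx
    have hsum : ∑ k, ‖(f n x - g x) k‖ ≤ Fintype.card κ * η :=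
      calc ∑ k, ‖(f n x - g x) k‖ ≤ ∑ _k : κ, η :=
            Finset.sum_le_sum fun k _ => by simpa using (hcon k).le
        _ = Fintype.card κ * η := by simp
    have hcard : Fintype.card κ * η < ε := by
      rw [mul_div_assoc', div_lt_iff₀ (by positivity)]
      nlinarith
    exact absurd ((EuclideanSpace.norm_le_sum_norm_apply _).trans hsum) (by linarith)
  have hlim : Tendsto (fun n => ∑ k, μ {x | η ≤ ‖f n x k - g x k‖}) l (𝓝 0) := by
    simpa using tendsto_finsetSum Finset.univ fun k _ => h k η hη
  exact tendsto_of_tendsto_of_tendsto_of_le_of_le tendsto_const_nhds hlim (fun _ => zero_le)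
    fun n => (measure_mono (hsub n)).trans (measure_iUnion_fintype_le μ _)

lemma tendstoInMeasure_euclidean_comp_of_forall_real_comp [Fintype κ] {X : Type*}
    [TopologicalSpace X] {f : ι → α → X} {g : α → X}
    (h : ∀ b : X → ℝ, Continuous b → HasCompactSupport b →
      TendstoInMeasure μ (fun n x => b (f n x)) l (fun x => b (g x)))
    {Φ : X → EuclideanSpace ℝ κ} (hΦ : Continuous Φ) (hΦc : HasCompactSupport Φ) :
    TendstoInMeasure μ (fun n x => Φ (f n x)) l (fun x => Φ (g x)) :=
  tendstoInMeasure_of_forall_apply fun k =>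
    h (fun v => Φ v k) ((EuclideanSpace.proj k).continuous.comp hΦ)
      (hΦc.comp_left (g := fun w : EuclideanSpace ℝ κ => w k) rfl)

theorem tendstoInMeasure_of_forall_hasCompactSupport_comp [Fintype κ] [IsFiniteMeasure μ]
    {f : ι → α → EuclideanSpace ℝ κ} {g : α → EuclideanSpace ℝ κ}
    (hg : AEStronglyMeasurable g μ)
    (h : ∀ b : EuclideanSpace ℝ κ → ℝ, Continuous b → HasCompactSupport b →
      TendstoInMeasure μ (fun n x => b (f n x)) l (fun x => b (g x))) :
    TendstoInMeasure μ f l g := by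
  rw [tendstoInMeasure_iff_norm]
  intro ε hε
  rw [ENNReal.tendsto_nhds_zero]
  intro c hc
  obtain ⟨R, hgR, hR⟩ := ((ENNReal.tendsto_nhds_zero.1 (tendsto_measure_le_norm_atTop hg) (c / 2)
    (ENNReal.half_pos hc.ne')).and (eventually_gt_atTop 0)).exists
  let χ : ContDiffBump (0 : EuclideanSpace ℝ κ) := ⟨R, R + 1, hR, by linarith⟩
  let ψ : ContDiffBump (0 : EuclideanSpace ℝ κ) := ⟨R + 1, R + 2, by linarith, by linarith⟩
  have hχ := tendstoInMeasure_iff_norm.1 (h (⇑χ) χ.continuous χ.hasCompactSupport) 1 one_pos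
  have hψ := tendstoInMeasure_iff_norm.1 (tendstoInMeasure_euclidean_comp_of_forall_real_comp h
    (Φ := fun v => ψ v • v) (ψ.continuous.smul continuous_id)
    ψ.hasCompactSupport.smul_right) ε hε
  filter_upwards [ENNReal.tendsto_nhds_zero.1 (by simpa using hχ.add hψ) (c / 2)
    (ENNReal.half_pos hc.ne')] with n hn
  have hsub : {x | ε ≤ ‖f n x - g x‖} ⊆ {x | R ≤ ‖g x‖} ∪
      ({x | 1 ≤ ‖χ (f n x) - χ (g x)‖} ∪ {x | ε ≤ ‖ψ (f n x) • f n x - ψ (g x) • g x‖}) := by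
    intro x hx
    rcases le_or_gt R ‖g x‖ with hgx | hgx
    · exact Or.inl hgx
    have hχg : χ (g x) = 1 := χ.one_of_mem_closedBall (by simpa using hgx.le)
    rcases le_or_gt (R + 1) ‖f n x‖ with hfx | hfx
    · have hχf : χ (f n x) = 0 := χ.zero_of_le_dist (by simpa using hfx)
      exact Or.inr (Or.inl (by simp [hχf, hχg]))
    have hψf : ψ (f n x) = 1 := ψ.one_of_mem_closedBall (by simpa using hfx.le)
    have hψg : ψ (g x) = 1 :=
      ψ.one_of_mem_closedBall (by simpa using (by linarith : ‖g x‖ ≤ R + 1))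
    exact Or.inr (Or.inr (by simpa [hψf, hψg] using hx))
  calc μ {x | ε ≤ ‖f n x - g x‖}
      ≤ μ {x | R ≤ ‖g x‖} + (μ {x | 1 ≤ ‖χ (f n x) - χ (g x)‖}
          + μ {x | ε ≤ ‖ψ (f n x) • f n x - ψ (g x) • g x‖}) :=
        (measure_mono hsub).trans ((measure_union_le _ _).trans
          (add_le_add le_rfl (measure_union_le _ _)))
    _ ≤ c / 2 + c / 2 := add_le_add hgR hn
    _ = c := ENNReal.add_halves c

lemma unifIntegrable_restrict_of_forall_integral_norm_lt {E : Type*} [NormedAddCommGroup E]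
    {f : ι → α → E} {Q : Set α} (hQ : MeasurableSet Q)
    (hf : ∀ i, Integrable (f i) (μ.restrict Q))
    (h : ∀ ε : ℝ, 0 < ε → ∃ δ : ℝ, 0 < δ ∧ ∀ i, ∀ A : Set α,
      MeasurableSet A → A ⊆ Q → μ A < ENNReal.ofReal δ → ∫ x in A, ‖f i x‖ ∂μ < ε) :
    UnifIntegrable f 1 (μ.restrict Q) := by
  intro ε hε
  obtain ⟨δ, hδ, hsmall⟩ := h ε hε
  refine ⟨δ / 2, half_pos hδ, fun i s hs hμs => ?_⟩
  have hsQ : s ∩ Q ⊆ Q := Set.inter_subset_right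
  have hμsQ : μ (s ∩ Q) < ENNReal.ofReal δ := by
    rw [← Measure.restrict_apply hs]
    exact hμs.trans_lt ((ENNReal.ofReal_lt_ofReal_iff hδ).2 (half_lt_self hδ))
  rw [eLpNorm_indicator_eq_eLpNorm_restrict hs, Measure.restrict_restrict hs,
    eLpNorm_one_eq_lintegral_enorm,
    ← ofReal_integral_norm_eq_lintegral_enorm
      ((hf i).mono_measure (Measure.restrict_mono hsQ le_rfl))]
  exact ENNReal.ofReal_le_ofReal (hsmall i _ (hs.inter hQ) hsQ hμsQ).le

lemma integral_norm_eq_toReal_eLpNorm_one {E : Type*} [NormedAddCommGroup E] {f : α → E}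
    (hf : AEStronglyMeasurable f μ) : ∫ x, ‖f x‖ ∂μ = (eLpNorm f 1 μ).toReal := by
  rw [integral_norm_eq_lintegral_enorm hf, eLpNorm_one_eq_lintegral_enorm]

end MeasureTheory

theorem strong_L1_of_equiIntegrable_of_compositions_general
    {D : ℕ} (Q : Set (EuclideanSpace ℝ (Fin D)))
    (hQopen : IsOpen Q) (hQbdd : Bornology.IsBounded Q)
    (U : ℕ → EuclideanSpace ℝ (Fin D) → EuclideanSpace ℝ (Fin D))
    (hUint : ∀ n, Integrable (U n) (volume.restrict Q))
    (hequi : ∀ ε : ℝ, 0 < ε → ∃ δ : ℝ, 0 < δ ∧ ∀ n, ∀ A : Set (EuclideanSpace ℝ (Fin D)),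
      MeasurableSet A → A ⊆ Q → volume A < ENNReal.ofReal δ →
        ∫ x in A, ‖U n x‖ < ε)
    (Ulim : EuclideanSpace ℝ (Fin D) → EuclideanSpace ℝ (Fin D))
    (hUlimint : Integrable Ulim (volume.restrict Q))
    (hb : ∀ b : EuclideanSpace ℝ (Fin D) → ℝ, Continuous b → HasCompactSupport b →
      Filter.Tendsto (fun n : ℕ =>
          eLpNorm (fun x => b (U n x) - b (Ulim x)) 2 (volume.restrict Q))
        Filter.atTop (nhds 0)) :
    Filter.Tendsto (fun n : ℕ => ∫ x in Q, ‖U n x - Ulim x‖)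
      Filter.atTop (nhds 0) := by
  have : IsFiniteMeasure (volume.restrict Q) :=
    isFiniteMeasure_restrict.2 hQbdd.measure_lt_top.ne
  have hmeas : TendstoInMeasure (volume.restrict Q) U atTop Ulim :=
    tendstoInMeasure_of_forall_hasCompactSupport_comp hUlimint.aestronglyMeasurable
      fun b hbc hbs =>
      tendstoInMeasure_of_tendsto_eLpNorm two_ne_zero
        (fun n => hbc.comp_aestronglyMeasurable (hUint n).aestronglyMeasurable)
        (hbc.comp_aestronglyMeasurable hUlimint.aestronglyMeasurable) (hb b hbc hbs)
  have hL1 := tendsto_Lp_finite_of_tendstoInMeasure le_rfl ENNReal.one_ne_top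
    (fun n => (hUint n).aestronglyMeasurable) (memLp_one_iff_integrable.2 hUlimint)
    (unifIntegrable_restrict_of_forall_integral_norm_lt hQopen.measurableSet hUint hequi) hmeas
  have hnorm : ∀ n, ∫ x in Q, ‖U n x - Ulim x‖
      = (eLpNorm (U n - Ulim) 1 (volume.restrict Q)).toReal :=
    fun n => integral_norm_eq_toReal_eLpNorm_one ((hUint n).sub hUlimint).aestronglyMeasurable
  simp_rw [hnorm]
  simpa [Function.comp_def] using (ENNReal.tendsto_toReal ENNReal.zero_ne_top).comp hL1

/-- The Dunford–Pettis step: if `{|U_n|}` is equi-integrable on a bounded domain `Q` and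
`b(U_n) → b(U)` in `L²(Q)` for every `b ∈ C_c(ℝ^D)`, then `U_n → U` strongly in
`L¹(Q; ℝ^D)`. -/
theorem strong_L1_of_equiIntegrable_of_compositions
    {D : ℕ} (Q : Set (EuclideanSpace ℝ (Fin D)))
    (hQopen : IsOpen Q) (hQbdd : Bornology.IsBounded Q)
    (U : ℕ → EuclideanSpace ℝ (Fin D) → EuclideanSpace ℝ (Fin D))
    (hUmeas : ∀ n, Measurable (U n))
    (hUint : ∀ n, Integrable (U n) (volume.restrict Q))
    (hequi : ∀ ε : ℝ, 0 < ε → ∃ δ : ℝ, 0 < δ ∧ ∀ n, ∀ A : Set (EuclideanSpace ℝ (Fin D)),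
      MeasurableSet A → A ⊆ Q → volume A < ENNReal.ofReal δ →
        ∫ x in A, ‖U n x‖ < ε)
    (Ulim : EuclideanSpace ℝ (Fin D) → EuclideanSpace ℝ (Fin D))
    (hUlimint : Integrable Ulim (volume.restrict Q))
    (hb : ∀ b : EuclideanSpace ℝ (Fin D) → ℝ, Continuous b → HasCompactSupport b →
      Filter.Tendsto (fun n : ℕ =>
          eLpNorm (fun x => b (U n x) - b (Ulim x)) 2 (volume.restrict Q))
        Filter.atTop (nhds 0)) :
    Filter.Tendsto (fun n : ℕ => ∫ x in Q, ‖U n x - Ulim x‖)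
      Filter.atTop (nhds 0) :=
  strong_L1_of_equiIntegrable_of_compositions_general Q hQopen hQbdd U hUint hequi Ulim hUlimint hb
end
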